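/- arXiv:1908.08317 — 8 statements merged into one kernel-verified Lean document; each statement's English description precedes it below -/
import Mathlib

section
/- Let a > 0, let u : [0,∞) → ℝ be continuous, and let x be a classical solution of the Neumann boundary-controlled linear heat equation on [0,1] with damping a, boundary input u and initial datum x₀. Then for every t > 0 the function t ↦ ½∫₀¹ x(ξ,t)² dξ is differentiable and (d/dt) ½∫₀¹ x(ξ,t)² dξ = −∫₀¹ (∂x/∂ξ)(ξ,t)² dξ − a ∫₀¹ x(ξ,t)² dξ + (x(1,t) − x(0,t))·u(t). -/
open MeasureTheory Set

/-- the energy `½∫₀¹ x(ξ,t)² dξ` of a classical solution of the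
Neumann boundary-controlled linear heat equation with damping `a` is differentiable
in `t > 0` with derivative `−∫₀¹ (∂x/∂ξ)² − a∫₀¹ x² + (x(1,t) − x(0,t))·u(t)`. -/
theorem stmt_0
    (a : ℝ) (ha : 0 < a)
    (u : ℝ → ℝ) (hu : Continuous u)
    (x₀ : ℝ → ℝ) (hx₀ : ContinuousOn x₀ (Icc 0 1))
    (x xt xξ xξξ : ℝ → ℝ → ℝ)
    (hxcont : ContinuousOn (fun p : ℝ × ℝ => x p.1 p.2) (Icc 0 1 ×ˢ Ici 0))
    (hxtcont : ContinuousOn (fun p : ℝ × ℝ => xt p.1 p.2) (Icc 0 1 ×ˢ Ioi 0))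
    (hxξcont : ContinuousOn (fun p : ℝ × ℝ => xξ p.1 p.2) (Icc 0 1 ×ˢ Ioi 0))
    (hxξξcont : ContinuousOn (fun p : ℝ × ℝ => xξξ p.1 p.2) (Icc 0 1 ×ˢ Ioi 0))
    (hdt : ∀ ξ ∈ Icc (0:ℝ) 1, ∀ t ∈ Ioi (0:ℝ),
      HasDerivAt (fun τ => x ξ τ) (xt ξ t) t)
    (hdξ : ∀ ξ ∈ Icc (0:ℝ) 1, ∀ t ∈ Ioi (0:ℝ),
      HasDerivWithinAt (fun ζ => x ζ t) (xξ ξ t) (Icc 0 1) ξ)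
    (hdξξ : ∀ ξ ∈ Icc (0:ℝ) 1, ∀ t ∈ Ioi (0:ℝ),
      HasDerivWithinAt (fun ζ => xξ ζ t) (xξξ ξ t) (Icc 0 1) ξ)
    (hpde : ∀ ξ ∈ Icc (0:ℝ) 1, ∀ t ∈ Ioi (0:ℝ), xt ξ t = xξξ ξ t - a * x ξ t)
    (hbc0 : ∀ t ∈ Ioi (0:ℝ), xξ 0 t = u t)
    (hbc1 : ∀ t ∈ Ioi (0:ℝ), xξ 1 t = u t)
    (hic : ∀ ξ ∈ Icc (0:ℝ) 1, x ξ 0 = x₀ ξ) :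
    ∀ t > (0:ℝ),
      HasDerivAt (fun τ => (1/2) * ∫ ξ in (0:ℝ)..1, (x ξ τ)^2)
        (-(∫ ξ in (0:ℝ)..1, (xξ ξ t)^2) - a * (∫ ξ in (0:ℝ)..1, (x ξ t)^2)
          + (x 1 t - x 0 t) * u t) t := by
  intro t ht
  have h01 : (0:ℝ) ≤ 1 := zero_le_one
  -- slice continuity helpers
  have slice : ∀ (f : ℝ → ℝ → ℝ), ContinuousOn (fun p : ℝ × ℝ => f p.1 p.2) (Icc 0 1 ×ˢ Ioi 0) →
      ∀ τ ∈ Ioi (0:ℝ), ContinuousOn (fun ξ => f ξ τ) (Icc 0 1) := by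
    intro f hf τ hτ
    have : ContinuousOn (fun ξ : ℝ => (ξ, τ)) (Icc 0 1) :=
      (continuous_id.prodMk continuous_const).continuousOn
    exact hf.comp this (fun ξ hξ => ⟨hξ, hτ⟩)
  have hx_t : ∀ τ ∈ Ioi (0:ℝ), ContinuousOn (fun ξ => x ξ τ) (Icc 0 1) := by
    intro τ hτ
    have : ContinuousOn (fun ξ : ℝ => (ξ, τ)) (Icc 0 1) :=
      (continuous_id.prodMk continuous_const).continuousOn
    exact hxcont.comp this (fun ξ hξ => ⟨hξ, Set.mem_Ici.mpr (le_of_lt (Set.mem_Ioi.mp hτ))⟩)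
  have hxt_t := slice xt hxtcont
  have hxξ_t := slice xξ hxξcont
  have hxξξ_t := slice xξξ hxξξcont
  -- integrability of various slices at time t
  have hint : ∀ (f : ℝ → ℝ), ContinuousOn f (Icc 0 1) → IntervalIntegrable f volume 0 1 := by
    intro f hf
    exact (hf.mono (by rw [uIcc_of_le h01])).intervalIntegrable
  -- Step A: integration by parts identity
  have hIBP : (∫ ξ in (0:ℝ)..1, (xξ ξ t * xξ ξ t + x ξ t * xξξ ξ t))
      = x 1 t * xξ 1 t - x 0 t * xξ 0 t := by
    apply intervalIntegral.integral_eq_sub_of_hasDeriv_right_of_le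
      (f := fun ξ => x ξ t * xξ ξ t)
      (f' := fun ξ => xξ ξ t * xξ ξ t + x ξ t * xξξ ξ t) h01
    · exact (hx_t t ht).mul (hxξ_t t ht)
    · intro ξ hξ
      have hξI : ξ ∈ Icc (0:ℝ) 1 := ⟨hξ.1.le, hξ.2.le⟩
      have hnhds : Icc (0:ℝ) 1 ∈ nhds ξ := Icc_mem_nhds hξ.1 hξ.2
      have h1 : HasDerivAt (fun ζ => x ζ t) (xξ ξ t) ξ :=
        (hdξ ξ hξI t ht).hasDerivAt hnhds
      have h2 : HasDerivAt (fun ζ => xξ ζ t) (xξξ ξ t) ξ :=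
        (hdξξ ξ hξI t ht).hasDerivAt hnhds
      exact (h1.mul h2).hasDerivWithinAt
    · exact hint _ (((hxξ_t t ht).mul (hxξ_t t ht)).add ((hx_t t ht).mul (hxξξ_t t ht)))
  have hi_xξ2 : IntervalIntegrable (fun ξ => (xξ ξ t)^2) volume 0 1 :=
    hint _ (by have := (hxξ_t t ht).mul (hxξ_t t ht); simpa [sq, Pi.mul_def] using this)
  have hi_x2 : IntervalIntegrable (fun ξ => (x ξ t)^2) volume 0 1 :=
    hint _ (by have := (hx_t t ht).mul (hx_t t ht); simpa [sq, Pi.mul_def] using this)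
  have hi_xxξξ : IntervalIntegrable (fun ξ => x ξ t * xξξ ξ t) volume 0 1 :=
    hint _ ((hx_t t ht).mul (hxξξ_t t ht))
  -- key identity for the derivative value
  have hkey : (∫ ξ in (0:ℝ)..1, x ξ t * xt ξ t)
      = -(∫ ξ in (0:ℝ)..1, (xξ ξ t)^2) - a * (∫ ξ in (0:ℝ)..1, (x ξ t)^2)
        + (x 1 t - x 0 t) * u t := by
    have e1 : (∫ ξ in (0:ℝ)..1, x ξ t * xt ξ t)
        = ∫ ξ in (0:ℝ)..1, (x ξ t * xξξ ξ t - a * (x ξ t)^2) := by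
      apply intervalIntegral.integral_congr
      intro ξ hξ
      have hξI : ξ ∈ Icc (0:ℝ) 1 := by rwa [uIcc_of_le h01] at hξ
      dsimp only
      rw [hpde ξ hξI t ht]; ring
    have e2 : (∫ ξ in (0:ℝ)..1, (xξ ξ t * xξ ξ t + x ξ t * xξξ ξ t))
        = (∫ ξ in (0:ℝ)..1, (xξ ξ t)^2) + ∫ ξ in (0:ℝ)..1, x ξ t * xξξ ξ t := by
      rw [← intervalIntegral.integral_add hi_xξ2 hi_xxξξ]
      apply intervalIntegral.integral_congr
      intro ξ _; ring
    have e3 : (∫ ξ in (0:ℝ)..1, x ξ t * xξξ ξ t)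
        = x 1 t * u t - x 0 t * u t - (∫ ξ in (0:ℝ)..1, (xξ ξ t)^2) := by
      rw [hbc0 t ht, hbc1 t ht] at hIBP
      linarith [hIBP, e2]
    rw [e1, intervalIntegral.integral_sub hi_xxξξ (hi_x2.const_mul a),
      intervalIntegral.integral_const_mul, e3]
    ring
  -- Step B: differentiation under the integral sign
  set J : Set ℝ := Icc (t/2) (t + t/2) with hJ
  have hJsub : J ⊆ Ioi (0:ℝ) := fun τ hτ => lt_of_lt_of_le (by linarith) hτ.1
  have hKcomp : IsCompact (Icc (0:ℝ) 1 ×ˢ J) := isCompact_Icc.prod isCompact_Icc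
  have hKcont : ContinuousOn (fun p : ℝ × ℝ => 2 * x p.1 p.2 * xt p.1 p.2)
      (Icc 0 1 ×ˢ J) := by
    have h1 : ContinuousOn (fun p : ℝ × ℝ => x p.1 p.2) (Icc 0 1 ×ˢ J) :=
      hxcont.mono (prod_mono_right (fun τ hτ => Set.mem_Ici.mpr (le_of_lt (Set.mem_Ioi.mp (hJsub hτ)))))
    have h2 : ContinuousOn (fun p : ℝ × ℝ => xt p.1 p.2) (Icc 0 1 ×ˢ J) :=
      hxtcont.mono (prod_mono_right hJsub)
    exact (continuousOn_const.mul h1).mul h2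
  obtain ⟨C, hC⟩ := hKcomp.exists_bound_of_continuousOn hKcont
  have hball : Metric.ball t (t/2) ⊆ J := by
    intro τ hτ
    rw [Metric.mem_ball, Real.dist_eq, abs_lt] at hτ
    exact ⟨by linarith [hτ.1], by linarith [hτ.2]⟩
  have hmain : HasDerivAt (fun τ => ∫ ξ in (0:ℝ)..1, (x ξ τ)^2)
      (∫ ξ in (0:ℝ)..1, 2 * x ξ t * xt ξ t) t := by
    have := intervalIntegral.hasDerivAt_integral_of_dominated_loc_of_deriv_le
      (F := fun τ ξ => (x ξ τ)^2) (F' := fun τ ξ => 2 * x ξ τ * xt ξ τ)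
      (x₀ := t) (a := 0) (b := 1) (bound := fun _ => C) (μ := volume)
      (Metric.ball_mem_nhds t (half_pos ht))
      ?meas ?int ?meas' ?bd ?bdint ?diff
    · exact this.2
    case meas =>
      filter_upwards [Metric.ball_mem_nhds t (half_pos ht)] with τ hτ
      have hτ' : τ ∈ Ioi (0:ℝ) := hJsub (hball hτ)
      have : ContinuousOn (fun ξ => (x ξ τ)^2) (Icc 0 1) := (hx_t τ hτ').pow 2
      exact (this.mono (by rw [uIoc_of_le h01]; exact Ioc_subset_Icc_self)).aestronglyMeasurable
        measurableSet_uIoc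
    case int =>
      exact hint _ ((hx_t t ht).pow 2)
    case meas' =>
      have : ContinuousOn (fun ξ => 2 * x ξ t * xt ξ t) (Icc 0 1) :=
        (continuousOn_const.mul (hx_t t ht)).mul (hxt_t t ht)
      exact (this.mono (by rw [uIoc_of_le h01]; exact Ioc_subset_Icc_self)).aestronglyMeasurable
        measurableSet_uIoc
    case bd =>
      filter_upwards with ξ hξ τ hτ
      have hξI : ξ ∈ Icc (0:ℝ) 1 := by
        rw [uIoc_of_le h01] at hξ; exact Ioc_subset_Icc_self hξ
      exact hC (ξ, τ) ⟨hξI, hball hτ⟩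
    case bdint =>
      exact intervalIntegrable_const
    case diff =>
      filter_upwards with ξ hξ τ hτ
      have hξI : ξ ∈ Icc (0:ℝ) 1 := by
        rw [uIoc_of_le h01] at hξ; exact Ioc_subset_Icc_self hξ
      have hτ' : τ ∈ Ioi (0:ℝ) := hJsub (hball hτ)
      have := (hdt ξ hξI τ hτ').pow 2
      simpa [Pi.pow_def, mul_comm, mul_assoc, mul_left_comm] using this
  -- assemble
  have hfinal := hmain.const_mul (1/2 : ℝ)
  have hval : (1/2 : ℝ) * ∫ ξ in (0:ℝ)..1, 2 * x ξ t * xt ξ t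
      = ∫ ξ in (0:ℝ)..1, x ξ t * xt ξ t := by
    have : (∫ ξ in (0:ℝ)..1, 2 * x ξ t * xt ξ t)
        = 2 * ∫ ξ in (0:ℝ)..1, x ξ t * xt ξ t := by
      rw [← intervalIntegral.integral_const_mul]
      apply intervalIntegral.integral_congr
      intro ξ _; ring
    rw [this]; ring
  rw [hval, hkey] at hfinal
  exact hfinal
end

section
/- Let a > 0 and ω ∈ (0, 2a). Then there exists a constant C̃ > 0, depending only on a and ω, such that for every continuous input u : [0,∞) → ℝ, every initial datum x₀ ∈ C([0,1]) and every classical solution x of the Neumann boundary-controlled linear heat equation on [0,1] with damping a, boundary input u and initial datum x₀, one has for all t > 0: ∫₀¹ x(ξ,t)² dξ ≤ e^{−ωt} ∫₀¹ x₀(ξ)² dξ + C̃ ∫₀ᵗ e^{−ω(t−s)} u(s)² ds. -/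
open MeasureTheory Set

/-- A classical solution of the Neumann boundary-controlled linear heat equation
on `[0,1]` with damping `a`, boundary input `u` and initial datum `x₀`.
Here `xt`, `xξ`, `xξξ` are the partial derivatives `∂x/∂t`, `∂x/∂ξ`, `∂²x/∂ξ²`. -/
structure IsNeumannHeatSolution (a : ℝ) (u : ℝ → ℝ) (x₀ : ℝ → ℝ)
    (x xt xξ xξξ : ℝ → ℝ → ℝ) : Prop where
  xcont : ContinuousOn (fun p : ℝ × ℝ => x p.1 p.2) (Icc 0 1 ×ˢ Ici 0)
  xtcont : ContinuousOn (fun p : ℝ × ℝ => xt p.1 p.2) (Icc 0 1 ×ˢ Ioi 0)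
  xξcont : ContinuousOn (fun p : ℝ × ℝ => xξ p.1 p.2) (Icc 0 1 ×ˢ Ioi 0)
  xξξcont : ContinuousOn (fun p : ℝ × ℝ => xξξ p.1 p.2) (Icc 0 1 ×ˢ Ioi 0)
  dt : ∀ ξ ∈ Icc (0:ℝ) 1, ∀ t ∈ Ioi (0:ℝ), HasDerivAt (fun τ => x ξ τ) (xt ξ t) t
  dξ : ∀ ξ ∈ Icc (0:ℝ) 1, ∀ t ∈ Ioi (0:ℝ),
    HasDerivWithinAt (fun ζ => x ζ t) (xξ ξ t) (Icc 0 1) ξ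
  dξξ : ∀ ξ ∈ Icc (0:ℝ) 1, ∀ t ∈ Ioi (0:ℝ),
    HasDerivWithinAt (fun ζ => xξ ζ t) (xξξ ξ t) (Icc 0 1) ξ
  pde : ∀ ξ ∈ Icc (0:ℝ) 1, ∀ t ∈ Ioi (0:ℝ), xt ξ t = xξξ ξ t - a * x ξ t
  bc0 : ∀ t ∈ Ioi (0:ℝ), xξ 0 t = u t
  bc1 : ∀ t ∈ Ioi (0:ℝ), xξ 1 t = u t
  ic : ∀ ξ ∈ Icc (0:ℝ) 1, x ξ 0 = x₀ ξ

/-- for `a > 0` and `ω ∈ (0,2a)` there is `C̃ > 0` (depending only on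
`a` and `ω`) such that every classical solution of the Neumann boundary-controlled
heat equation satisfies
`∫₀¹ x(ξ,t)² dξ ≤ e^{−ωt}∫₀¹ x₀² + C̃ ∫₀ᵗ e^{−ω(t−s)} u(s)² ds` for all `t > 0`. -/
theorem stmt_2 (a ω : ℝ) (ha : 0 < a) (hω : ω ∈ Ioo 0 (2 * a)) :
    ∃ C > (0:ℝ), ∀ (u : ℝ → ℝ), Continuous u →
      ∀ (x₀ : ℝ → ℝ), ContinuousOn x₀ (Icc 0 1) →
      ∀ (x xt xξ xξξ : ℝ → ℝ → ℝ), IsNeumannHeatSolution a u x₀ x xt xξ xξξ →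
      ∀ t > (0:ℝ),
        (∫ ξ in (0:ℝ)..1, (x ξ t)^2)
          ≤ Real.exp (-ω * t) * (∫ ξ in (0:ℝ)..1, (x₀ ξ)^2)
            + C * ∫ s in (0:ℝ)..t, Real.exp (-ω * (t - s)) * (u s)^2 := by
  obtain ⟨hω0, hω2⟩ := hω
  refine ⟨1/2, by norm_num, ?_⟩
  intro u hu x₀ hx₀ x xt xξ xξξ hsol t ht
  obtain ⟨xc, xtc, xξc, xξξc, hdt, hdξ, hdξξ, hpde, hbc0, hbc1, hic⟩ := hsol
  have h01 : (0:ℝ) ≤ 1 := zero_le_one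
  have huIcc : uIcc (0:ℝ) 1 = Icc 0 1 := uIcc_of_le h01
  have huIoc : uIoc (0:ℝ) 1 = Ioc 0 1 := uIoc_of_le h01
  -- slice continuity
  have sliceX : ∀ τ : ℝ, 0 ≤ τ → ContinuousOn (fun ξ => x ξ τ) (Icc 0 1) := by
    intro τ hτ
    exact xc.comp ((continuous_id.prodMk continuous_const).continuousOn)
      (fun ξ hξ => ⟨hξ, hτ⟩)
  have slice : ∀ {f : ℝ → ℝ → ℝ},
      ContinuousOn (fun p : ℝ × ℝ => f p.1 p.2) (Icc 0 1 ×ˢ Ioi 0) →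
      ∀ τ : ℝ, 0 < τ → ContinuousOn (fun ξ => f ξ τ) (Icc 0 1) := by
    intro f hf τ hτ
    exact hf.comp ((continuous_id.prodMk continuous_const).continuousOn)
      (fun ξ hξ => ⟨hξ, hτ⟩)
  have intCI : ∀ {f : ℝ → ℝ}, ContinuousOn f (Icc 0 1) →
      IntervalIntegrable f volume 0 1 := by
    intro f hf
    exact (huIcc ▸ hf : ContinuousOn f (uIcc 0 1)).intervalIntegrable
  set E : ℝ → ℝ := fun τ => ∫ ξ in (0:ℝ)..1, (x ξ τ)^2 with hE
  have hEnonneg : ∀ τ : ℝ, 0 ≤ E τ := fun τ =>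
    intervalIntegral.integral_nonneg h01 (fun ξ _ => sq_nonneg _)
  -- continuity of E on [0, ∞) via Tietze extension
  have hEcont : ContinuousOn E (Ici 0) := by
    obtain ⟨g, hg⟩ := ContinuousMap.exists_restrict_eq
      (s := Icc 0 1 ×ˢ Ici (0:ℝ)) (isClosed_Icc.prod isClosed_Ici)
      ⟨_, xc.restrict⟩
    have hg' : ∀ p ∈ Icc (0:ℝ) 1 ×ˢ Ici (0:ℝ), g p = x p.1 p.2 := by
      intro p hp
      exact DFunLike.congr_fun hg ⟨p, hp⟩
    have hgc : Continuous fun τ : ℝ => ∫ ξ in (0:ℝ)..1, (g (ξ, τ))^2 := by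
      apply intervalIntegral.continuous_parametric_intervalIntegral_of_continuous'
        (f := fun τ ξ => (g (ξ, τ))^2)
      show Continuous fun p : ℝ × ℝ => (g (p.2, p.1))^2
      exact (g.continuous.comp continuous_swap).pow 2
    refine hgc.continuousOn.congr ?_
    intro τ hτ
    apply intervalIntegral.integral_congr
    intro ξ hξ
    rw [huIcc] at hξ
    show x ξ τ ^ 2 = g (ξ, τ) ^ 2
    rw [hg' (ξ, τ) ⟨hξ, hτ⟩]
  -- derivative of E
  have hEderiv : ∀ τ : ℝ, 0 < τ →
      HasDerivAt E (∫ ξ in (0:ℝ)..1, 2 * x ξ τ * xt ξ τ) τ := by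
    intro τ hτ
    have hε : 0 < τ/2 := by linarith
    have hball : Metric.ball τ (τ/2) ⊆ Ioi (0:ℝ) := by
      intro s hs
      rw [Metric.mem_ball, Real.dist_eq, abs_lt] at hs
      have : τ/2 < s := by linarith [hs.1]
      exact lt_trans hε this
    have hballIcc : Metric.ball τ (τ/2) ⊆ Icc (τ/2) (τ + τ/2) := by
      intro s hs
      rw [Metric.mem_ball, Real.dist_eq, abs_lt] at hs
      constructor <;> linarith [hs.1, hs.2]
    set K : Set (ℝ × ℝ) := Icc 0 1 ×ˢ Icc (τ/2) (τ + τ/2) with hK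
    have hKc : IsCompact K := isCompact_Icc.prod isCompact_Icc
    have hKsub : K ⊆ Icc 0 1 ×ˢ Ioi (0:ℝ) := fun p hp =>
      ⟨hp.1, lt_of_lt_of_le hε hp.2.1⟩
    have hKsub' : K ⊆ Icc 0 1 ×ˢ Ici (0:ℝ) := fun p hp =>
      ⟨hp.1, le_trans hε.le hp.2.1⟩
    obtain ⟨Mx, hMx⟩ := hKc.exists_bound_of_continuousOn (xc.mono hKsub')
    obtain ⟨Mt, hMt⟩ := hKc.exists_bound_of_continuousOn (xtc.mono hKsub)
    have hres := intervalIntegral.hasDerivAt_integral_of_dominated_loc_of_deriv_le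
      (F := fun τ' ξ => (x ξ τ')^2) (F' := fun τ' ξ => 2 * x ξ τ' * xt ξ τ')
      (bound := fun _ => 2 * |Mx| * |Mt|) (a := 0) (b := 1) (μ := volume) (x₀ := τ) (Metric.ball_mem_nhds τ hε)
      ?_ ?_ ?_ ?_ ?_ ?_
    · exact hres.2
    · -- measurability of F near τ
      filter_upwards [Ioi_mem_nhds hτ] with τ' hτ'
      have := ((sliceX τ' (le_of_lt hτ')).pow 2).mono Ioc_subset_Icc_self
      rw [huIoc]
      exact this.aestronglyMeasurable measurableSet_Ioc
    · exact intCI ((sliceX τ hτ.le).pow 2)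
    · -- measurability of F' τ
      have c1 : ContinuousOn (fun ξ => 2 * x ξ τ * xt ξ τ) (Icc 0 1) :=
        (continuousOn_const.mul (sliceX τ hτ.le)).mul (slice xtc τ hτ)
      rw [huIoc]
      exact (c1.mono Ioc_subset_Icc_self).aestronglyMeasurable measurableSet_Ioc
    · -- bound
      refine Filter.Eventually.of_forall ?_
      intro ξ hξ τ' hτ'
      have hξ' : ξ ∈ Icc (0:ℝ) 1 := Ioc_subset_Icc_self (huIoc ▸ hξ)
      have hmem : (ξ, τ') ∈ K := ⟨hξ', hballIcc hτ'⟩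
      have h1 : |x ξ τ'| ≤ |Mx| := le_trans (hMx _ hmem) (le_abs_self _)
      have h2 : |xt ξ τ'| ≤ |Mt| := le_trans (hMt _ hmem) (le_abs_self _)
      have : ‖2 * x ξ τ' * xt ξ τ'‖ = 2 * |x ξ τ'| * |xt ξ τ'| := by
        rw [Real.norm_eq_abs, abs_mul, abs_mul, abs_two]
      rw [this]
      have h0t : (0:ℝ) ≤ |xt ξ τ'| := abs_nonneg _
      have hb : 2 * |x ξ τ'| * |xt ξ τ'| ≤ 2 * |Mx| * |Mt| := by
        nlinarith [mul_le_mul h1 h2 h0t (abs_nonneg Mx)]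
      exact hb
    · exact intervalIntegrable_const
    · -- differentiability in t
      refine Filter.Eventually.of_forall ?_
      intro ξ hξ τ' hτ'
      have hξ' : ξ ∈ Icc (0:ℝ) 1 := Ioc_subset_Icc_self (huIoc ▸ hξ)
      have hd := hdt ξ hξ' τ' (hball hτ')
      have : HasDerivAt (fun τ => x ξ τ ^ 2) _ τ' := hd.pow 2
      simpa [pow_one, mul_comm, mul_assoc, mul_left_comm] using this
  -- the key differential inequality
  have key : ∀ τ : ℝ, 0 < τ →
      (∫ ξ in (0:ℝ)..1, 2 * x ξ τ * xt ξ τ) ≤ -ω * E τ + (u τ)^2 / 2 := by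
    intro τ hτ
    have cx := sliceX τ hτ.le
    have cxξ := slice xξc τ hτ
    have cxξξ := slice xξξc τ hτ
    set m : ℝ := x 1 τ - x 0 τ with hm
    clear_value m
    -- FTC for xξ
    have I1 : (∫ ξ in (0:ℝ)..1, xξ ξ τ) = m := by
      rw [hm]
      apply intervalIntegral.integral_eq_sub_of_hasDeriv_right_of_le h01 cx
        ?_ (intCI cxξ)
      intro ξ hξ
      have h := hdξ ξ (Ioo_subset_Icc_self hξ) τ hτ
      exact (h.hasDerivAt (Icc_mem_nhds hξ.1 hξ.2)).hasDerivWithinAt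
    -- integration by parts for x * xξ
    have I2 : (∫ ξ in (0:ℝ)..1, ((xξ ξ τ)^2 + x ξ τ * xξξ ξ τ)) = u τ * m := by
      have hIBP : (∫ ξ in (0:ℝ)..1, ((xξ ξ τ)^2 + x ξ τ * xξξ ξ τ))
          = x 1 τ * xξ 1 τ - x 0 τ * xξ 0 τ := by
        apply intervalIntegral.integral_eq_sub_of_hasDeriv_right_of_le h01
          (cx.mul cxξ) ?_ (intCI ((cxξ.pow 2).add (cx.mul cxξξ)))
        intro ξ hξ
        have hξ' : ξ ∈ Icc (0:ℝ) 1 := Ioo_subset_Icc_self hξ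
        have h1 := (hdξ ξ hξ' τ hτ).hasDerivAt (Icc_mem_nhds hξ.1 hξ.2)
        have h2 := (hdξξ ξ hξ' τ hτ).hasDerivAt (Icc_mem_nhds hξ.1 hξ.2)
        have := (h1.mul h2).hasDerivWithinAt (s := Ioi ξ)
        convert this using 1
        simp only [Pi.add_apply, Pi.mul_apply, Pi.pow_apply]
        ring
      rw [hIBP, hbc0 τ hτ, hbc1 τ hτ, hm]
      ring
    -- Cauchy–Schwarz
    have CS : m^2 ≤ ∫ ξ in (0:ℝ)..1, (xξ ξ τ)^2 := by
      have h0 : 0 ≤ ∫ ξ in (0:ℝ)..1, (xξ ξ τ - m)^2 :=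
        intervalIntegral.integral_nonneg h01 (fun ξ _ => sq_nonneg _)
      have hexp : (∫ ξ in (0:ℝ)..1, (xξ ξ τ - m)^2)
          = (∫ ξ in (0:ℝ)..1, (xξ ξ τ)^2) - 2*m*(∫ ξ in (0:ℝ)..1, xξ ξ τ) + m^2 := by
        have heq : (fun ξ => (xξ ξ τ - m)^2)
            = fun ξ => ((xξ ξ τ)^2 - (2*m) * xξ ξ τ) + m^2 := by
          funext ξ; ring
        rw [heq]
        rw [intervalIntegral.integral_add ((intCI (cxξ.pow 2) :
            IntervalIntegrable (fun ξ => xξ ξ τ ^ 2) volume 0 1).sub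
            ((intCI cxξ).const_mul (2*m))) intervalIntegrable_const,
          intervalIntegral.integral_sub (intCI (cxξ.pow 2) :
            IntervalIntegrable (fun ξ => xξ ξ τ ^ 2) volume 0 1)
            ((intCI cxξ).const_mul (2*m)),
          intervalIntegral.integral_const_mul, intervalIntegral.integral_const]
        simp
      rw [hexp, I1] at h0
      linarith
    -- rewrite the integral using the PDE
    have main : (∫ ξ in (0:ℝ)..1, 2 * x ξ τ * xt ξ τ)
        = 2*(u τ * m) - 2*(∫ ξ in (0:ℝ)..1, (xξ ξ τ)^2) - 2*a*(E τ) := by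
      have hcongr : (∫ ξ in (0:ℝ)..1, 2 * x ξ τ * xt ξ τ)
          = ∫ ξ in (0:ℝ)..1,
              (2*((xξ ξ τ)^2 + x ξ τ * xξξ ξ τ) - 2*(xξ ξ τ)^2 - 2*a*(x ξ τ)^2) := by
        apply intervalIntegral.integral_congr
        intro ξ hξ
        rw [huIcc] at hξ
        show 2 * x ξ τ * xt ξ τ
          = 2*((xξ ξ τ)^2 + x ξ τ * xξξ ξ τ) - 2*(xξ ξ τ)^2 - 2*a*(x ξ τ)^2
        rw [hpde ξ hξ τ hτ]
        ring
      rw [hcongr]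
      have i1 : IntervalIntegrable (fun ξ => 2*((xξ ξ τ)^2 + x ξ τ * xξξ ξ τ)) volume 0 1 :=
        intCI (continuousOn_const.mul ((cxξ.pow 2).add (cx.mul cxξξ)))
      have i2 : IntervalIntegrable (fun ξ => 2*(xξ ξ τ)^2) volume 0 1 :=
        intCI (continuousOn_const.mul (cxξ.pow 2))
      have i3 : IntervalIntegrable (fun ξ => 2*a*(x ξ τ)^2) volume 0 1 :=
        intCI (continuousOn_const.mul (cx.pow 2))
      rw [intervalIntegral.integral_sub (i1.sub i2) i3,
        intervalIntegral.integral_sub i1 i2,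
        intervalIntegral.integral_const_mul, intervalIntegral.integral_const_mul,
        intervalIntegral.integral_const_mul, I2]
    rw [main]
    have hEn := hEnonneg τ
    have h2 : 2*(u τ * m) ≤ (u τ)^2/2 + 2*m^2 := by nlinarith [sq_nonneg (u τ - 2*m)]
    have h3 : 0 ≤ (2*a - ω) * E τ :=
      mul_nonneg (by linarith : (0:ℝ) ≤ 2*a - ω) hEn
    nlinarith [h2, h3, CS]
  -- Grönwall argument
  set H : ℝ → ℝ := fun τ => ∫ s in (0:ℝ)..τ, Real.exp (ω*s) * (u s)^2 / 2 with hH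
  have hHc : Continuous fun s : ℝ => Real.exp (ω*s) * (u s)^2 / 2 :=
    ((Real.continuous_exp.comp (continuous_const.mul continuous_id)).mul (hu.pow 2)).div_const 2
  have hHd : ∀ τ : ℝ, HasDerivAt H (Real.exp (ω*τ) * (u τ)^2 / 2) τ := by
    intro τ
    exact intervalIntegral.integral_hasDerivAt_right (hHc.intervalIntegrable _ _)
      (hHc.stronglyMeasurableAtFilter _ _) hHc.continuousAt
  set G : ℝ → ℝ := fun τ => Real.exp (ω*τ) * E τ - H τ with hG
  have hexpd : ∀ τ : ℝ, HasDerivAt (fun s => Real.exp (ω*s)) (ω * Real.exp (ω*τ)) τ := by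
    intro τ
    have := ((hasDerivAt_id τ).const_mul ω).exp
    simpa [mul_comm] using this
  have hGd : ∀ τ : ℝ, 0 < τ → HasDerivAt G
      (ω * Real.exp (ω*τ) * E τ
        + Real.exp (ω*τ) * (∫ ξ in (0:ℝ)..1, 2 * x ξ τ * xt ξ τ)
        - Real.exp (ω*τ) * (u τ)^2 / 2) τ := by
    intro τ hτ
    exact ((hexpd τ).mul (hEderiv τ hτ)).sub (hHd τ)
  have hGanti : AntitoneOn G (Icc 0 t) := by
    apply antitoneOn_of_deriv_nonpos (convex_Icc 0 t)
    · apply ContinuousOn.sub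
      · exact ((Real.continuous_exp.comp
          (continuous_const.mul continuous_id)).continuousOn).mul
          (hEcont.mono Icc_subset_Ici_self)
      · exact (intervalIntegral.continuous_primitive (fun a b => hHc.intervalIntegrable a b) 0).continuousOn
    · rw [interior_Icc]
      intro s hs
      exact ((hGd s hs.1).differentiableAt).differentiableWithinAt
    · rw [interior_Icc]
      intro s hs
      rw [(hGd s hs.1).deriv]
      have hk := key s hs.1
      have hep := Real.exp_pos (ω*s)
      nlinarith
  have hGle : G t ≤ G 0 :=
    hGanti (left_mem_Icc.2 ht.le) (right_mem_Icc.2 ht.le) ht.le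
  have hG0 : G 0 = E 0 := by
    simp [hG, hH]
  have hE0 : E 0 = ∫ ξ in (0:ℝ)..1, (x₀ ξ)^2 := by
    apply intervalIntegral.integral_congr
    intro ξ hξ
    rw [huIcc] at hξ
    show x ξ 0 ^ 2 = x₀ ξ ^ 2
    rw [hic ξ hξ]
  have h1 : Real.exp (ω*t) * E t - H t ≤ E 0 := by
    rw [hG0] at hGle
    exact hGle
  have hrw : Real.exp (-ω*t) * H t
      = 1/2 * ∫ s in (0:ℝ)..t, Real.exp (-ω*(t-s)) * (u s)^2 := by
    rw [hH, ← intervalIntegral.integral_const_mul, ← intervalIntegral.integral_const_mul]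
    apply intervalIntegral.integral_congr
    intro s _
    show Real.exp (-ω*t) * (Real.exp (ω*s) * (u s)^2 / 2)
      = 1/2 * (Real.exp (-ω*(t-s)) * (u s)^2)
    rw [show -ω*(t-s) = -ω*t + ω*s by ring, Real.exp_add]
    ring
  have hept : (0:ℝ) < Real.exp (-ω*t) := Real.exp_pos _
  have hprod : Real.exp (-ω*t) * Real.exp (ω*t) = 1 := by
    rw [← Real.exp_add]; ring_nf; exact Real.exp_zero
  calc E t = Real.exp (-ω*t) * (Real.exp (ω*t) * E t) := by
        rw [← mul_assoc, hprod, one_mul]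
    _ ≤ Real.exp (-ω*t) * (E 0 + H t) := by
        apply mul_le_mul_of_nonneg_left _ hept.le
        linarith
    _ = Real.exp (-ω*t) * E 0 + Real.exp (-ω*t) * H t := by ring
    _ ≤ Real.exp (-ω*t) * (∫ ξ in (0:ℝ)..1, (x₀ ξ)^2)
        + 1/2 * ∫ s in (0:ℝ)..t, Real.exp (-ω*(t-s)) * (u s)^2 := by
        rw [hE0] at *
        rw [hrw]
end

section
/- Let a > 0 and q ∈ [2,∞]. Then there exist constants C > 0 and ω > 0, depending only on a and q, such that for every continuous input u : [0,∞) → ℝ, every x₀ ∈ C([0,1]) and every classical solution x of the Neumann boundary-controlled linear heat equation on [0,1] with damping a, boundary input u and initial datum x₀, one has for all t > 0: (∫₀¹ x(ξ,t)² dξ)^{1/2} ≤ C e^{−ωt} (∫₀¹ x₀(ξ)² dξ)^{1/2} + C ‖u‖_{L^q(0,t)}. That is, the boundary-controlled heat equation is L^q-input-to-state stable for every q ∈ [2,∞]. -/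
open MeasureTheory Set ENNReal

lemma my_sqrt_add (x y : ℝ) (hx : 0 ≤ x) (hy : 0 ≤ y) :
    Real.sqrt (x + y) ≤ Real.sqrt x + Real.sqrt y := by
  have h : x + y ≤ (Real.sqrt x + Real.sqrt y) ^ 2 := by
    have := Real.sq_sqrt hx
    have := Real.sq_sqrt hy
    have h2 : 0 ≤ Real.sqrt x * Real.sqrt y := by positivity
    nlinarith
  calc Real.sqrt (x + y) ≤ Real.sqrt ((Real.sqrt x + Real.sqrt y)^2) := Real.sqrt_le_sqrt h
    _ = _ := Real.sqrt_sq (by positivity)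

lemma my_cs (f : ℝ → ℝ) (hf : ContinuousOn f (Icc 0 1)) :
    (∫ ξ in (0:ℝ)..1, f ξ) ^ 2 ≤ ∫ ξ in (0:ℝ)..1, (f ξ)^2 := by
  have huIcc : uIcc (0:ℝ) 1 = Icc 0 1 := uIcc_of_le zero_le_one
  have hif : IntervalIntegrable f volume 0 1 := (huIcc ▸ hf).intervalIntegrable
  have hif2 : IntervalIntegrable (fun ξ => (f ξ)^2) volume 0 1 :=
    (huIcc ▸ (hf.pow 2)).intervalIntegrable
  set c := ∫ ξ in (0:ℝ)..1, f ξ with hc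
  have key : (0:ℝ) ≤ ∫ ξ in (0:ℝ)..1, (f ξ - c)^2 :=
    intervalIntegral.integral_nonneg zero_le_one (fun u _ => sq_nonneg _)
  have expand : ∫ ξ in (0:ℝ)..1, (f ξ - c)^2
      = (∫ ξ in (0:ℝ)..1, (f ξ)^2) - 2*c*c + c^2 := by
    have h1 : ∀ ξ, (f ξ - c)^2 = (f ξ)^2 - 2*c*(f ξ) + c^2 := fun ξ => by ring
    simp_rw [h1]
    rw [intervalIntegral.integral_add (hif2.sub (hif.const_mul (2*c)))
        intervalIntegrable_const,
      intervalIntegral.integral_sub hif2 (hif.const_mul (2*c)),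
      intervalIntegral.integral_const_mul, intervalIntegral.integral_const]
    simp [← hc]
  nlinarith [key, expand]

lemma slice_cont {f : ℝ → ℝ → ℝ} {S : Set ℝ}
    (hf : ContinuousOn (fun p : ℝ × ℝ => f p.1 p.2) (Icc 0 1 ×ˢ S)) {t : ℝ} (htS : t ∈ S) :
    ContinuousOn (fun ξ => f ξ t) (Icc 0 1) :=
  hf.comp (Continuous.continuousOn (continuous_id.prodMk continuous_const)) (fun ξ hξ => ⟨hξ, htS⟩)

lemma tslice_cont {f : ℝ → ℝ → ℝ} {S : Set ℝ}
    (hf : ContinuousOn (fun p : ℝ × ℝ => f p.1 p.2) (Icc 0 1 ×ˢ S)) {ξ : ℝ}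
    (hξ : ξ ∈ Icc (0:ℝ) 1) :
    ContinuousOn (fun t => f ξ t) S :=
  hf.comp (Continuous.continuousOn (continuous_const.prodMk continuous_id)) (fun t ht => ⟨hξ, ht⟩)

lemma heat_E_deriv {a : ℝ} {u x₀ : ℝ → ℝ} {x xt xξ xξξ : ℝ → ℝ → ℝ}
    (hs : IsNeumannHeatSolution a u x₀ x xt xξ xξξ) {t : ℝ} (ht : 0 < t) :
    HasDerivAt (fun τ => ∫ ξ in (0:ℝ)..1, (x ξ τ)^2)
      (∫ ξ in (0:ℝ)..1, 2 * x ξ t * xt ξ t) t := by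
  set μ := volume.restrict (Ioc (0:ℝ) 1) with hμ
  -- bound on the compact set
  have hsub1 : Icc (0:ℝ) 1 ×ˢ Icc (t/2) (t+1) ⊆ Icc 0 1 ×ˢ Ici (0:ℝ) :=
    prod_mono_right (Icc_subset_Ici_self.trans (Ici_subset_Ici.2 (by linarith)))
  have hsub2 : Icc (0:ℝ) 1 ×ˢ Icc (t/2) (t+1) ⊆ Icc 0 1 ×ˢ Ioi (0:ℝ) :=
    prod_mono_right (fun τ hτ => lt_of_lt_of_le (by linarith : (0:ℝ) < t/2) hτ.1)
  have hF'c : ContinuousOn (fun p : ℝ × ℝ => 2 * x p.1 p.2 * xt p.1 p.2)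
      (Icc 0 1 ×ˢ Icc (t/2) (t+1)) :=
    ((continuousOn_const.mul (hs.xcont.mono hsub1)).mul (hs.xtcont.mono hsub2))
  obtain ⟨M, hM⟩ := (isCompact_Icc.prod isCompact_Icc).exists_bound_of_continuousOn hF'c
  set ε := min (t/2) 1 with hε
  have hε_pos : 0 < ε := lt_min (by linarith) one_pos
  have hball : ∀ τ ∈ Metric.ball t ε, τ ∈ Icc (t/2) (t+1) := by
    intro τ hτ
    rw [Metric.mem_ball, Real.dist_eq, abs_lt] at hτ
    constructor
    · have := min_le_left (t/2) 1; linarith [hτ.1]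
    · have := min_le_right (t/2) 1; linarith [hτ.2]
  have hball_pos : ∀ τ ∈ Metric.ball t ε, 0 < τ := fun τ hτ =>
    lt_of_lt_of_le (by linarith) (hball τ hτ).1
  have key := hasDerivAt_integral_of_dominated_loc_of_deriv_le
    (F := fun τ ξ => (x ξ τ)^2) (F' := fun τ ξ => 2 * x ξ τ * xt ξ τ)
    (x₀ := t) (μ := μ) (bound := fun _ => M) (Metric.ball_mem_nhds t hε_pos)
    ?_ ?_ ?_ ?_ ?_ ?_
  · have h1 : (fun τ => ∫ ξ in (0:ℝ)..1, (x ξ τ)^2) = (fun τ => ∫ ξ, (x ξ τ)^2 ∂μ) := by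
      funext τ; rw [intervalIntegral.integral_of_le zero_le_one]
    have h2 : (∫ ξ in (0:ℝ)..1, 2 * x ξ t * xt ξ t) = ∫ ξ, 2 * x ξ t * xt ξ t ∂μ := by
      rw [intervalIntegral.integral_of_le zero_le_one]
    rw [h1, h2]
    exact key.2
  · -- measurability of F τ near t
    filter_upwards [eventually_gt_nhds ht] with τ hτ
    have : ContinuousOn (fun ξ => (x ξ τ)^2) (Icc 0 1) :=
      (slice_cont hs.xcont (le_of_lt hτ : (0:ℝ) ≤ τ)).pow 2
    exact (this.mono Ioc_subset_Icc_self).aestronglyMeasurable measurableSet_Ioc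
  · -- integrability of F t
    have : ContinuousOn (fun ξ => (x ξ t)^2) (Icc 0 1) :=
      (slice_cont hs.xcont (le_of_lt ht : (0:ℝ) ≤ t)).pow 2
    exact this.integrableOn_Icc.mono_set Ioc_subset_Icc_self
  · -- measurability of F' t
    have : ContinuousOn (fun ξ => 2 * x ξ t * xt ξ t) (Icc 0 1) :=
      (continuousOn_const.mul (slice_cont hs.xcont (le_of_lt ht : (0:ℝ) ≤ t))).mul
        (slice_cont hs.xtcont ht)
    exact (this.mono Ioc_subset_Icc_self).aestronglyMeasurable measurableSet_Ioc
  · -- bound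
    filter_upwards [ae_restrict_mem measurableSet_Ioc] with ξ hξ
    intro τ hτ
    exact hM (ξ, τ) ⟨Ioc_subset_Icc_self hξ, hball τ hτ⟩
  · exact integrable_const M
  · -- differentiability
    filter_upwards [ae_restrict_mem measurableSet_Ioc] with ξ hξ
    intro τ hτ
    have hd := hs.dt ξ (Ioc_subset_Icc_self hξ) τ (hball_pos τ hτ)
    have := hd.pow 2
    simpa [mul_comm, mul_assoc, mul_left_comm, Pi.pow_def] using this

lemma heat_E_cont {a : ℝ} {u x₀ : ℝ → ℝ} {x xt xξ xξξ : ℝ → ℝ → ℝ}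
    (hs : IsNeumannHeatSolution a u x₀ x xt xξ xξξ) {t : ℝ} (ht : 0 < t) :
    ContinuousOn (fun τ => ∫ ξ in (0:ℝ)..1, (x ξ τ)^2) (Icc 0 t) := by
  set μ := volume.restrict (Ioc (0:ℝ) 1) with hμ
  have h1 : (fun τ => ∫ ξ in (0:ℝ)..1, (x ξ τ)^2) = (fun τ => ∫ ξ, (x ξ τ)^2 ∂μ) := by
    funext τ; rw [intervalIntegral.integral_of_le zero_le_one]
  rw [h1]
  have hsub : Icc (0:ℝ) 1 ×ˢ Icc 0 t ⊆ Icc 0 1 ×ˢ Ici (0:ℝ) :=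
    prod_mono_right Icc_subset_Ici_self
  obtain ⟨M, hM⟩ := (isCompact_Icc.prod isCompact_Icc).exists_bound_of_continuousOn
    ((hs.xcont.mono hsub).pow 2)
  apply continuousOn_of_dominated (bound := fun _ => M)
  · intro τ hτ
    have : ContinuousOn (fun ξ => (x ξ τ)^2) (Icc 0 1) :=
      (slice_cont hs.xcont (hτ.1 : (0:ℝ) ≤ τ)).pow 2
    exact (this.mono Ioc_subset_Icc_self).aestronglyMeasurable measurableSet_Ioc
  · intro τ hτ
    filter_upwards [ae_restrict_mem measurableSet_Ioc] with ξ hξ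
    exact hM (ξ, τ) ⟨Ioc_subset_Icc_self hξ, hτ⟩
  · exact integrable_const M
  · filter_upwards [ae_restrict_mem measurableSet_Ioc] with ξ hξ
    exact ((tslice_cont hs.xcont (Ioc_subset_Icc_self hξ)).mono
      Icc_subset_Ici_self).pow 2

lemma heat_D_ineq {a : ℝ} {u x₀ : ℝ → ℝ} {x xt xξ xξξ : ℝ → ℝ → ℝ}
    (hs : IsNeumannHeatSolution a u x₀ x xt xξ xξξ) {t : ℝ} (ht : 0 < t) :
    (∫ ξ in (0:ℝ)..1, 2 * x ξ t * xt ξ t)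
      ≤ -(2*a) * (∫ ξ in (0:ℝ)..1, (x ξ t)^2) + (u t)^2 := by
  have huIcc : uIcc (0:ℝ) 1 = Icc 0 1 := uIcc_of_le zero_le_one
  have hx : ContinuousOn (fun ξ => x ξ t) (Icc 0 1) := slice_cont hs.xcont ht.le
  have hxξ : ContinuousOn (fun ξ => xξ ξ t) (Icc 0 1) := slice_cont hs.xξcont ht
  have hxξξ : ContinuousOn (fun ξ => xξξ ξ t) (Icc 0 1) := slice_cont hs.xξξcont ht
  have hxt : ContinuousOn (fun ξ => xt ξ t) (Icc 0 1) := slice_cont hs.xtcont ht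
  -- FTC: ∫ xξ = x 1 t - x 0 t
  have h_ftc : ∫ ξ in (0:ℝ)..1, xξ ξ t = x 1 t - x 0 t := by
    apply intervalIntegral.integral_eq_sub_of_hasDeriv_right_of_le zero_le_one hx
    · intro ξ hξ
      have := (hs.dξ ξ (Ioo_subset_Icc_self hξ) t ht).hasDerivAt
        (Icc_mem_nhds hξ.1 hξ.2)
      exact this.hasDerivWithinAt
    · exact (huIcc ▸ hxξ).intervalIntegrable
  -- IBP
  have h_ibp : ∫ ξ in (0:ℝ)..1, ((xξ ξ t)^2 + x ξ t * xξξ ξ t)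
      = x 1 t * u t - x 0 t * u t := by
    have := intervalIntegral.integral_eq_sub_of_hasDeriv_right_of_le zero_le_one
      (f := fun ξ => x ξ t * xξ ξ t)
      (f' := fun ξ => (xξ ξ t)^2 + x ξ t * xξξ ξ t)
      (hx.mul hxξ)
      (fun ξ hξ => by
        have h1 := (hs.dξ ξ (Ioo_subset_Icc_self hξ) t ht).hasDerivAt
          (Icc_mem_nhds hξ.1 hξ.2)
        have h2 := (hs.dξξ ξ (Ioo_subset_Icc_self hξ) t ht).hasDerivAt
          (Icc_mem_nhds hξ.1 hξ.2)
        have := h1.mul h2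
        have heq : xξ ξ t * xξ ξ t + x ξ t * xξξ ξ t
            = (xξ ξ t)^2 + x ξ t * xξξ ξ t := by ring
        exact (heq ▸ this).hasDerivWithinAt)
      (huIcc ▸ ((hxξ.pow 2).add (hx.mul hxξξ))).intervalIntegrable
    rw [this]
    show x 1 t * xξ 1 t - x 0 t * xξ 0 t = _
    rw [hs.bc0 t ht, hs.bc1 t ht]
  -- rewrite integrand via the PDE
  have h_pde : ∫ ξ in (0:ℝ)..1, 2 * x ξ t * xt ξ t
      = ∫ ξ in (0:ℝ)..1, (2 * (x ξ t * xξξ ξ t) - 2*a*(x ξ t)^2) := by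
    apply intervalIntegral.integral_congr
    intro ξ hξ
    rw [huIcc] at hξ
    show 2 * x ξ t * xt ξ t = 2 * (x ξ t * xξξ ξ t) - 2*a*(x ξ t)^2
    rw [hs.pde ξ hξ t ht]
    ring
  have hint1 : IntervalIntegrable (fun ξ => x ξ t * xξξ ξ t) volume 0 1 :=
    (huIcc ▸ (hx.mul hxξξ)).intervalIntegrable
  have hint2 : IntervalIntegrable (fun ξ => (x ξ t)^2) volume 0 1 :=
    (huIcc ▸ (hx.pow 2)).intervalIntegrable
  have hint3 : IntervalIntegrable (fun ξ => (xξ ξ t)^2) volume 0 1 :=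
    (huIcc ▸ (hxξ.pow 2)).intervalIntegrable
  have h_split : ∫ ξ in (0:ℝ)..1, (2 * (x ξ t * xξξ ξ t) - 2*a*(x ξ t)^2)
      = 2 * (∫ ξ in (0:ℝ)..1, x ξ t * xξξ ξ t) - 2*a*(∫ ξ in (0:ℝ)..1, (x ξ t)^2) := by
    rw [intervalIntegral.integral_sub (hint1.const_mul 2) (hint2.const_mul (2*a)),
      intervalIntegral.integral_const_mul, intervalIntegral.integral_const_mul]
  -- split the IBP integral
  have h_ibp2 : ∫ ξ in (0:ℝ)..1, x ξ t * xξξ ξ t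
      = (x 1 t * u t - x 0 t * u t) - ∫ ξ in (0:ℝ)..1, (xξ ξ t)^2 := by
    rw [← h_ibp, intervalIntegral.integral_add hint3 hint1]
    ring
  -- Cauchy-Schwarz
  have h_cs : (x 1 t - x 0 t)^2 ≤ ∫ ξ in (0:ℝ)..1, (xξ ξ t)^2 := by
    rw [← h_ftc]
    exact my_cs _ hxξ
  have h_nonneg : (0:ℝ) ≤ ∫ ξ in (0:ℝ)..1, (xξ ξ t)^2 :=
    intervalIntegral.integral_nonneg zero_le_one (fun _ _ => sq_nonneg _)
  rw [h_pde, h_split, h_ibp2]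
  nlinarith [sq_nonneg (x 1 t - x 0 t - u t)]

lemma my_gronwall (b : ℝ) (E E' g : ℝ → ℝ) (hg : Continuous g)
    (t : ℝ) (ht : 0 < t)
    (hEc : ContinuousOn E (Icc 0 t))
    (hEd : ∀ s ∈ Ioi (0:ℝ), HasDerivAt E (E' s) s)
    (hineq : ∀ s ∈ Ioi (0:ℝ), E' s ≤ -b * E s + g s) :
    E t ≤ Real.exp (-b*t) * E 0 + Real.exp (-b*t) * ∫ s in (0:ℝ)..t, Real.exp (b*s) * g s := by
  set G : ℝ → ℝ := fun s => Real.exp (b*s) * E s - ∫ r in (0:ℝ)..s, Real.exp (b*r) * g r with hG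
  have hgi : Continuous (fun r => Real.exp (b*r) * g r) :=
    (Real.continuous_exp.comp (continuous_const.mul continuous_id)).mul hg
  have hGc : ContinuousOn G (Icc 0 t) := by
    apply ContinuousOn.sub
    · exact (Real.continuous_exp.comp (continuous_const.mul continuous_id)).continuousOn.mul hEc
    · exact (intervalIntegral.continuous_primitive (fun a b => hgi.intervalIntegrable a b) 0).continuousOn
  have hGd : ∀ s ∈ interior (Icc (0:ℝ) t), HasDerivAt G
      (b * Real.exp (b*s) * E s + Real.exp (b*s) * E' s - Real.exp (b*s) * g s) s := by
    intro s hs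
    rw [interior_Icc] at hs
    have h1 : HasDerivAt (fun s => Real.exp (b*s) * E s)
        (b * Real.exp (b*s) * E s + Real.exp (b*s) * E' s) s := by
      have he : HasDerivAt (fun s => Real.exp (b*s)) (b * Real.exp (b*s)) s := by
        have := (Real.hasDerivAt_exp (b*s)).comp s ((hasDerivAt_id s).const_mul b)
        simpa [mul_comm, Function.comp_def] using this
      exact he.mul (hEd s hs.1)
    have h2 : HasDerivAt (fun s => ∫ r in (0:ℝ)..s, Real.exp (b*r) * g r)
        (Real.exp (b*s) * g s) s :=
      intervalIntegral.integral_hasDerivAt_right (hgi.intervalIntegrable _ _)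
        (hgi.stronglyMeasurableAtFilter _ _) hgi.continuousAt
    exact h1.sub h2
  have hmono : AntitoneOn G (Icc 0 t) := by
    apply antitoneOn_of_deriv_nonpos (convex_Icc 0 t) hGc
    · intro s hs
      exact ((hGd s hs).differentiableAt).differentiableWithinAt
    · intro s hs
      rw [(hGd s hs).deriv]
      have hs' : s ∈ Ioi (0:ℝ) := by rw [interior_Icc] at hs; exact hs.1
      have := hineq s hs'
      have hep : 0 < Real.exp (b*s) := Real.exp_pos _
      nlinarith
  have hGt : G t ≤ G 0 := hmono (left_mem_Icc.2 ht.le) (right_mem_Icc.2 ht.le) ht.le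
  have hG0 : G 0 = E 0 := by simp [hG]
  rw [hG0] at hGt
  have : Real.exp (b*t) * E t ≤ E 0 + ∫ r in (0:ℝ)..t, Real.exp (b*r) * g r := by
    have := hGt; simp only [hG] at this; linarith
  have hone : Real.exp (-b*t) * Real.exp (b*t) = 1 := by
    rw [← Real.exp_add]; ring_nf; exact Real.exp_zero
  have h3 := mul_le_mul_of_nonneg_left this (Real.exp_pos (-b*t)).le
  have h4 : Real.exp (-b*t) * (Real.exp (b*t) * E t) = E t := by
    rw [← mul_assoc, hone, one_mul]
  rw [h4] at h3
  linarith [h3, mul_add (Real.exp (-b*t)) (E 0) (∫ r in (0:ℝ)..t, Real.exp (b*r) * g r) ▸ h3]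

lemma my_memLq (u : ℝ → ℝ) (hu : Continuous u) (p : ℝ≥0∞) (S : Set ℝ) (hSm : MeasurableSet S)
    (t : ℝ) (hS : S ⊆ Ioc 0 t) : MemLp u p (volume.restrict S) := by
  obtain ⟨M, hM⟩ : ∃ M, ∀ s ∈ Icc (0:ℝ) t, ‖u s‖ ≤ M := by
    rcases (isCompact_Icc (a := (0:ℝ)) (b := t)).exists_bound_of_continuousOn
      (hu.norm.continuousOn) with ⟨M, hM⟩
    exact ⟨M, fun s hs => by simpa using hM s hs⟩
  haveI : IsFiniteMeasure (volume.restrict S) := by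
    constructor
    rw [Measure.restrict_apply_univ]
    exact lt_of_le_of_lt (measure_mono hS) (by simp)
  refine MemLp.of_bound hu.aestronglyMeasurable M ?_
  filter_upwards [ae_restrict_mem hSm] with s hs
  exact hM s (Ioc_subset_Icc_self (hS hs))

lemma my_L2_piece (u : ℝ → ℝ) (hu : Continuous u) (q : ℝ≥0∞) (hq : 2 ≤ q)
    (t : ℝ) (ht : 0 < t) (J : Set ℝ) (hJm : MeasurableSet J) (hJs : J ⊆ Ioc 0 t)
    (hJ1 : volume J ≤ 1) :
    ∫ s in J, (u s)^2 ≤ ((eLpNorm u q (volume.restrict (Ioc (0:ℝ) t))).toReal)^2 := by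
  set μJ := volume.restrict J with hμJ
  have hmem2 : MemLp u 2 μJ := my_memLq u hu 2 J hJm t hJs
  have hmemq : MemLp u q (volume.restrict (Ioc (0:ℝ) t)) :=
    my_memLq u hu q _ measurableSet_Ioc t subset_rfl
  -- ∫ u² = toReal (eLpNorm u 2 μJ) ^ 2
  have h2eq : eLpNorm u 2 μJ
      = ENNReal.ofReal ((∫ s, ‖u s‖ ^ (2:ℝ) ∂μJ) ^ ((2:ℝ))⁻¹) := by
    have := hmem2.eLpNorm_eq_integral_rpow_norm (by norm_num) (by norm_num)
    simpa using this
  have hint_nonneg : 0 ≤ ∫ s, ‖u s‖ ^ (2:ℝ) ∂μJ :=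
    integral_nonneg (fun s => by positivity)
  have htoReal : (eLpNorm u 2 μJ).toReal = (∫ s, ‖u s‖ ^ (2:ℝ) ∂μJ) ^ ((2:ℝ))⁻¹ := by
    rw [h2eq, ENNReal.toReal_ofReal (by positivity)]
  have hI : ∫ s in J, (u s)^2 = ((eLpNorm u 2 μJ).toReal)^2 := by
    rw [htoReal, ← Real.rpow_natCast (_ ^ ((2:ℝ))⁻¹) 2, ← Real.rpow_mul hint_nonneg]
    norm_num
    rfl
  -- eLpNorm comparison
  have hcomp : eLpNorm u 2 μJ ≤ eLpNorm u q (volume.restrict (Ioc (0:ℝ) t)) := by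
    calc eLpNorm u 2 μJ
        ≤ eLpNorm u q μJ * (μJ Set.univ) ^ (1/(2:ℝ≥0∞).toReal - 1/q.toReal) :=
          eLpNorm_le_eLpNorm_mul_rpow_measure_univ hq hu.aestronglyMeasurable
      _ ≤ eLpNorm u q μJ * 1 := by
          gcongr
          apply ENNReal.rpow_le_one
          · rw [hμJ, Measure.restrict_apply_univ]; exact hJ1
          · rcases eq_or_ne q ∞ with h | h
            · simp [h]
            · have h2 : (2:ℝ) ≤ q.toReal := by
                have := ENNReal.toReal_mono h hq
                simpa using this
              have : 1/q.toReal ≤ 1/2 := by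
                apply one_div_le_one_div_of_le <;> linarith
              simp only [ENNReal.toReal_ofNat]
              linarith
      _ = eLpNorm u q μJ := mul_one _
      _ ≤ eLpNorm u q (volume.restrict (Ioc (0:ℝ) t)) :=
          eLpNorm_mono_measure u (Measure.restrict_mono hJs le_rfl)
  have hfin : eLpNorm u q (volume.restrict (Ioc (0:ℝ) t)) ≠ ∞ := hmemq.2.ne
  have := ENNReal.toReal_mono hfin hcomp
  rw [hI]
  have h0 : 0 ≤ (eLpNorm u 2 μJ).toReal := ENNReal.toReal_nonneg
  nlinarith
lemma my_weight_bound (a : ℝ) (ha : 0 < a) (u : ℝ → ℝ) (hu : Continuous u)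
    (q : ℝ≥0∞) (hq : 2 ≤ q) (t : ℝ) (ht : 0 < t) :
    ∫ s in (0:ℝ)..t, Real.exp (2*a*(s-t)) * (u s)^2
      ≤ (1 - Real.exp (-(2*a)))⁻¹
        * ((eLpNorm u q (volume.restrict (Ioc (0:ℝ) t))).toReal)^2 := by
  set N := (eLpNorm u q (volume.restrict (Ioc (0:ℝ) t))).toReal with hN
  have hN0 : 0 ≤ N := ENNReal.toReal_nonneg
  set n := ⌈t⌉₊ with hn
  set g : ℝ → ℝ := fun s => ∑ k ∈ Finset.range n,
    Real.exp (-(2*a)*k) * (Ioc (t-(k:ℝ)-1) (t-(k:ℝ))).indicator (fun s => (u s)^2) s with hg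
  have hu2 : Continuous (fun s => (u s)^2) := hu.pow 2
  have hu2int : Integrable (fun s => (u s)^2) (volume.restrict (Ioc (0:ℝ) t)) :=
    hu2.integrableOn_Ioc
  have hgterm : ∀ k : ℕ, Integrable
      (fun s => Real.exp (-(2*a)*k) * (Ioc (t-(k:ℝ)-1) (t-(k:ℝ))).indicator
        (fun s => (u s)^2) s) (volume.restrict (Ioc (0:ℝ) t)) := by
    intro k
    exact ((hu2int.indicator measurableSet_Ioc).const_mul _)
  have hgint : Integrable g (volume.restrict (Ioc (0:ℝ) t)) := by
    rw [hg]; exact integrable_finset_sum _ (fun k _ => hgterm k)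
  have hlc : Continuous (fun s => Real.exp (2*a*(s-t)) * (u s)^2) :=
    (Real.continuous_exp.comp (by fun_prop)).mul hu2
  have hlint : Integrable (fun s => Real.exp (2*a*(s-t)) * (u s)^2)
      (volume.restrict (Ioc (0:ℝ) t)) := hlc.integrableOn_Ioc
  have hpt : ∀ s ∈ Ioc (0:ℝ) t, Real.exp (2*a*(s-t)) * (u s)^2 ≤ g s := by
    intro s hs
    set k := ⌊t - s⌋₊ with hk
    have h0 : 0 ≤ t - s := sub_nonneg.2 hs.2
    have hk1 : (k:ℝ) ≤ t - s := Nat.floor_le h0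
    have hk2 : t - s < k + 1 := Nat.lt_floor_add_one _
    have hkn : k < n := by
      rw [hk, Nat.floor_lt h0, hn]
      exact lt_of_lt_of_le (by linarith [hs.1]) (Nat.le_ceil t)
    have hmem : s ∈ Ioc (t-(k:ℝ)-1) (t-(k:ℝ)) := ⟨by linarith, by linarith⟩
    have hterm : Real.exp (2*a*(s-t)) * (u s)^2
        ≤ Real.exp (-(2*a)*k) * (Ioc (t-(k:ℝ)-1) (t-(k:ℝ))).indicator (fun s => (u s)^2) s := by
      rw [Set.indicator_of_mem hmem]
      apply mul_le_mul_of_nonneg_right _ (sq_nonneg _)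
      rw [Real.exp_le_exp]; nlinarith
    refine le_trans hterm ?_
    exact Finset.single_le_sum (f := fun k : ℕ => Real.exp (-(2*a)*k)
        * (Ioc (t-(k:ℝ)-1) (t-(k:ℝ))).indicator (fun s => (u s)^2) s)
      (fun i _ => mul_nonneg (Real.exp_pos _).le
        (Set.indicator_nonneg (fun y _ => sq_nonneg _) _)) (Finset.mem_range.2 hkn)
  have step1 : ∫ s in (0:ℝ)..t, Real.exp (2*a*(s-t)) * (u s)^2
      ≤ ∫ s in Ioc (0:ℝ) t, g s := by
    rw [intervalIntegral.integral_of_le ht.le]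
    exact setIntegral_mono_on hlint hgint measurableSet_Ioc hpt
  have step2 : ∫ s in Ioc (0:ℝ) t, g s
      = ∑ k ∈ Finset.range n, Real.exp (-(2*a)*k)
        * ∫ s in (Ioc (t-(k:ℝ)-1) (t-(k:ℝ)) ∩ Ioc (0:ℝ) t), (u s)^2 := by
    rw [hg, integral_finset_sum _ (fun k _ => hgterm k)]
    congr 1
    ext k
    rw [integral_const_mul, integral_indicator measurableSet_Ioc,
      Measure.restrict_restrict measurableSet_Ioc]
  have step3 : ∀ k : ℕ,
      ∫ s in (Ioc (t-(k:ℝ)-1) (t-(k:ℝ)) ∩ Ioc (0:ℝ) t), (u s)^2 ≤ N^2 := by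
    intro k
    apply my_L2_piece u hu q hq t ht _ (measurableSet_Ioc.inter measurableSet_Ioc)
      inter_subset_right
    calc volume (Ioc (t-(k:ℝ)-1) (t-(k:ℝ)) ∩ Ioc (0:ℝ) t)
        ≤ volume (Ioc (t-(k:ℝ)-1) (t-(k:ℝ))) := measure_mono inter_subset_left
      _ = ENNReal.ofReal ((t-(k:ℝ)) - (t-(k:ℝ)-1)) := Real.volume_Ioc
      _ ≤ 1 := by norm_num
  set r := Real.exp (-(2*a)) with hr
  have hr0 : 0 ≤ r := (Real.exp_pos _).le
  have hr1 : r < 1 := Real.exp_lt_one_iff.2 (by linarith)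
  have step4 : ∑ k ∈ Finset.range n, Real.exp (-(2*a)*k)
        * ∫ s in (Ioc (t-(k:ℝ)-1) (t-(k:ℝ)) ∩ Ioc (0:ℝ) t), (u s)^2
      ≤ (1-r)⁻¹ * N^2 := by
    have hsum : ∀ k : ℕ, Real.exp (-(2*a)*k) = r^k := by
      intro k; rw [hr, mul_comm, Real.exp_nat_mul]
    calc ∑ k ∈ Finset.range n, Real.exp (-(2*a)*k)
          * ∫ s in (Ioc (t-(k:ℝ)-1) (t-(k:ℝ)) ∩ Ioc (0:ℝ) t), (u s)^2
        ≤ ∑ k ∈ Finset.range n, r^k * N^2 := by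
          apply Finset.sum_le_sum
          intro k _
          rw [hsum k]
          have hnn : 0 ≤ ∫ s in (Ioc (t-(k:ℝ)-1) (t-(k:ℝ)) ∩ Ioc (0:ℝ) t), (u s)^2 :=
            integral_nonneg (fun s => sq_nonneg _)
          exact mul_le_mul_of_nonneg_left (step3 k) (pow_nonneg hr0 k)
      _ = (∑ k ∈ Finset.range n, r^k) * N^2 := by rw [Finset.sum_mul]
      _ ≤ (1-r)⁻¹ * N^2 := by
          apply mul_le_mul_of_nonneg_right _ (sq_nonneg _)
          calc ∑ k ∈ Finset.range n, r^k ≤ ∑' k : ℕ, r^k :=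
                Summable.sum_le_tsum _ (fun i _ => pow_nonneg hr0 i)
                  (summable_geometric_of_lt_one hr0 hr1)
            _ = (1-r)⁻¹ := tsum_geometric_of_lt_one hr0 hr1
  calc ∫ s in (0:ℝ)..t, Real.exp (2*a*(s-t)) * (u s)^2
      ≤ ∫ s in Ioc (0:ℝ) t, g s := step1
    _ = _ := step2
    _ ≤ (1-r)⁻¹ * N^2 := step4

/-- for `a > 0` and `q ∈ [2,∞]` there are `C > 0`, `ω > 0` (depending
only on `a` and `q`) such that every classical solution of the Neumann
boundary-controlled heat equation satisfies, for all `t > 0`,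
`(∫₀¹ x(ξ,t)²)^{1/2} ≤ C e^{−ωt} (∫₀¹ x₀²)^{1/2} + C ‖u‖_{L^q(0,t)}`:
the system is `L^q`-input-to-state stable. -/
theorem stmt_3 (a : ℝ) (ha : 0 < a) (q : ℝ≥0∞) (hq : 2 ≤ q) :
    ∃ C > (0:ℝ), ∃ ω > (0:ℝ), ∀ (u : ℝ → ℝ), Continuous u →
      ∀ (x₀ : ℝ → ℝ), ContinuousOn x₀ (Icc 0 1) →
      ∀ (x xt xξ xξξ : ℝ → ℝ → ℝ), IsNeumannHeatSolution a u x₀ x xt xξ xξξ →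
      ∀ t > (0:ℝ),
        Real.sqrt (∫ ξ in (0:ℝ)..1, (x ξ t)^2)
          ≤ C * Real.exp (-ω * t) * Real.sqrt (∫ ξ in (0:ℝ)..1, (x₀ ξ)^2)
            + C * (eLpNorm u q (volume.restrict (Ioc (0:ℝ) t))).toReal := by
  set r := Real.exp (-(2*a)) with hr
  have hr1 : r < 1 := Real.exp_lt_one_iff.2 (by linarith)
  have hr0 : (0:ℝ) < 1 - r := by linarith
  set sqC := Real.sqrt ((1 - r)⁻¹) with hsqC
  have hsqC0 : 0 ≤ sqC := Real.sqrt_nonneg _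
  refine ⟨1 + sqC, by linarith, a, ha, ?_⟩
  intro u hu x₀ hx₀ x xt xξ xξξ hsol t ht
  set N := (eLpNorm u q (volume.restrict (Ioc (0:ℝ) t))).toReal with hN
  have hN0 : 0 ≤ N := ENNReal.toReal_nonneg
  set E : ℝ → ℝ := fun τ => ∫ ξ in (0:ℝ)..1, (x ξ τ)^2 with hE
  have hgron := my_gronwall (2*a) E
    (fun s => ∫ ξ in (0:ℝ)..1, 2 * x ξ s * xt ξ s)
    (fun s => (u s)^2) (hu.pow 2) t ht (heat_E_cont hsol ht)
    (fun s hs' => heat_E_deriv hsol hs')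
    (fun s hs' => heat_D_ineq hsol hs')
  set W := ∫ s in (0:ℝ)..t, Real.exp (2*a*(s-t)) * (u s)^2 with hW
  have hWeq : Real.exp (-(2*a)*t) * (∫ s in (0:ℝ)..t, Real.exp (2*a*s) * (u s)^2) = W := by
    rw [hW, ← intervalIntegral.integral_const_mul]
    apply intervalIntegral.integral_congr
    intro s _
    show Real.exp (-(2*a)*t) * (Real.exp (2*a*s) * (u s)^2) = Real.exp (2*a*(s-t)) * (u s)^2
    rw [← mul_assoc, ← Real.exp_add]
    congr 2
    ring
  have hE0 : E 0 = ∫ ξ in (0:ℝ)..1, (x₀ ξ)^2 := by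
    apply intervalIntegral.integral_congr
    intro ξ hξ
    rw [uIcc_of_le zero_le_one] at hξ
    show (x ξ 0)^2 = (x₀ ξ)^2
    rw [hsol.ic ξ hξ]
  have hE0nn : 0 ≤ ∫ ξ in (0:ℝ)..1, (x₀ ξ)^2 :=
    intervalIntegral.integral_nonneg zero_le_one (fun _ _ => sq_nonneg _)
  have hWnn : 0 ≤ W :=
    intervalIntegral.integral_nonneg ht.le
      (fun s _ => mul_nonneg (Real.exp_pos _).le (sq_nonneg _))
  have hWle : W ≤ (1 - r)⁻¹ * N^2 := my_weight_bound a ha u hu q hq t ht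
  have hEt_le : E t ≤ Real.exp (-(2*a)*t) * (∫ ξ in (0:ℝ)..1, (x₀ ξ)^2) + W := by
    rw [← hE0, ← hWeq]
    exact hgron
  have hexp2 : Real.exp (-(2*a)*t) = Real.exp (-a*t) * Real.exp (-a*t) := by
    rw [← Real.exp_add]; congr 1; ring
  have step1 : Real.sqrt (E t)
      ≤ Real.exp (-a*t) * Real.sqrt (∫ ξ in (0:ℝ)..1, (x₀ ξ)^2) + Real.sqrt W := by
    calc Real.sqrt (E t)
        ≤ Real.sqrt (Real.exp (-(2*a)*t) * (∫ ξ in (0:ℝ)..1, (x₀ ξ)^2) + W) :=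
          Real.sqrt_le_sqrt hEt_le
      _ ≤ Real.sqrt (Real.exp (-(2*a)*t) * (∫ ξ in (0:ℝ)..1, (x₀ ξ)^2)) + Real.sqrt W :=
          my_sqrt_add _ _ (mul_nonneg (Real.exp_pos _).le hE0nn) hWnn
      _ = Real.exp (-a*t) * Real.sqrt (∫ ξ in (0:ℝ)..1, (x₀ ξ)^2) + Real.sqrt W := by
          rw [hexp2, mul_assoc, Real.sqrt_mul (Real.exp_pos _).le,
            Real.sqrt_mul (Real.exp_pos _).le, ← mul_assoc,
            Real.mul_self_sqrt (Real.exp_pos _).le]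
  have step2 : Real.sqrt W ≤ sqC * N := by
    calc Real.sqrt W ≤ Real.sqrt ((1 - r)⁻¹ * N^2) := Real.sqrt_le_sqrt hWle
      _ = sqC * N := by
          rw [Real.sqrt_mul (by positivity) (N^2), Real.sqrt_sq hN0, hsqC]
  have hsE0 : 0 ≤ Real.sqrt (∫ ξ in (0:ℝ)..1, (x₀ ξ)^2) := Real.sqrt_nonneg _
  have hexp_pos : (0:ℝ) < Real.exp (-a*t) := Real.exp_pos _
  calc Real.sqrt (E t)
      ≤ Real.exp (-a*t) * Real.sqrt (∫ ξ in (0:ℝ)..1, (x₀ ξ)^2) + Real.sqrt W := step1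
    _ ≤ Real.exp (-a*t) * Real.sqrt (∫ ξ in (0:ℝ)..1, (x₀ ξ)^2) + sqC * N := by linarith
    _ ≤ (1 + sqC) * Real.exp (-a*t) * Real.sqrt (∫ ξ in (0:ℝ)..1, (x₀ ξ)^2) + (1 + sqC) * N := by
        have h1 : Real.exp (-a*t) * Real.sqrt (∫ ξ in (0:ℝ)..1, (x₀ ξ)^2)
            ≤ (1 + sqC) * Real.exp (-a*t) * Real.sqrt (∫ ξ in (0:ℝ)..1, (x₀ ξ)^2) := by
          nlinarith [mul_nonneg (mul_nonneg hsqC0 hexp_pos.le) hsE0]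
        have h2 : sqC * N ≤ (1 + sqC) * N := by nlinarith
        linarith
end

section
/- Let X and U be Banach spaces, α ∈ (0,1], ω < 0 and K ≥ 0. Let Ψ : (0,∞) → L(U,X) (bounded linear operators) be such that r ↦ Ψ(r)v is continuous on (0,∞) for every v ∈ U and ‖Ψ(r)‖ ≤ K·r^{α−1}·e^{ωr} for all r > 0. Then for every q ∈ (1/α, ∞] there exists a constant C > 0, independent of t, such that for every t > 0 and every u ∈ L^q(0,t;U) the Bochner integral ∫₀ᵗ Ψ(t−s)u(s) ds converges in X and satisfies ∫₀ᵗ ‖Ψ(t−s)u(s)‖_X ds ≤ C ‖u‖_{L^q(0,t;U)}. -/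
open MeasureTheory Set ENNReal

section Aux

lemma ofReal_norm_eq_coe_nnnorm {E : Type*} [SeminormedAddCommGroup E] (a : E) :
    ENNReal.ofReal ‖a‖ = (‖a‖₊ : ℝ≥0∞) :=
  ENNReal.ofReal_eq_coe_nnreal _

variable {X U : Type*} [NormedAddCommGroup X] [NormedSpace ℝ X] [CompleteSpace X]
  [NormedAddCommGroup U] [NormedSpace ℝ U] [CompleteSpace U]

lemma aux_aesm (Ψ : ℝ → U →L[ℝ] X)
    (hΨcont : ∀ v : U, ContinuousOn (fun r => Ψ r v) (Ioi 0))
    (t : ℝ) (u : ℝ → U)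
    (hu : AEStronglyMeasurable u (volume.restrict (Ioo (0:ℝ) t))) :
    AEStronglyMeasurable (fun s => Ψ (t - s) (u s)) (volume.restrict (Ioo (0:ℝ) t)) := by
  have hconst : ∀ c : U, AEStronglyMeasurable (fun s => Ψ (t - s) c)
      (volume.restrict (Ioo (0:ℝ) t)) := by
    intro c
    have hcont : ContinuousOn (fun s => Ψ (t - s) c) (Iio t) := by
      apply (hΨcont c).comp ((continuous_const.sub continuous_id).continuousOn)
      intro s hs
      simp only [mem_Iio] at hs
      simpa using sub_pos.mpr hs
    exact (hcont.aestronglyMeasurable measurableSet_Iio).mono_measure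
      (Measure.restrict_mono Ioo_subset_Iio_self le_rfl)
  obtain ⟨v, hv, huv⟩ := hu
  have h1 : ∀ φ : SimpleFunc ℝ U, AEStronglyMeasurable (fun s => Ψ (t - s) (φ s))
      (volume.restrict (Ioo (0:ℝ) t)) := by
    intro φ
    induction φ using SimpleFunc.induction with
    | const c hs =>
      rename_i s
      have : (fun x => Ψ (t - x)
          ((SimpleFunc.piecewise s hs (SimpleFunc.const _ c) (SimpleFunc.const _ 0)) x))
          = Set.indicator s (fun x => Ψ (t - x) c) := by
        ext x
        by_cases hx : x ∈ s <;>
          simp [SimpleFunc.piecewise_apply, hx, Set.indicator_apply]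
      rw [this]
      exact (hconst c).indicator hs
    | add hdisj hf hg =>
      rename_i f g
      have : (fun s => Ψ (t - s) ((f + g) s))
          = fun s => Ψ (t - s) (f s) + Ψ (t - s) (g s) := by
        ext s; simp [map_add]
      rw [this]; exact hf.add hg
  have h2 : AEStronglyMeasurable (fun s => Ψ (t - s) (v s))
      (volume.restrict (Ioo (0:ℝ) t)) := by
    apply aestronglyMeasurable_of_tendsto_ae Filter.atTop (fun n => h1 (hv.approx n))
    exact Filter.Eventually.of_forall fun s =>
      ((Ψ (t - s)).continuous.tendsto _).comp (hv.tendsto_approx s)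
  exact h2.congr (huv.mono fun s hs => by simp only []; rw [← hs])

lemma aux_key (α ω K : ℝ) (hα : α ∈ Ioc (0:ℝ) 1) (hω : ω < 0) (hK : 0 ≤ K)
    (Ψ : ℝ → U →L[ℝ] X)
    (hΨcont : ∀ v : U, ContinuousOn (fun r => Ψ r v) (Ioi 0))
    (hΨbound : ∀ r > (0:ℝ), ‖Ψ r‖ ≤ K * r ^ (α - 1) * Real.exp (ω * r))
    (q p : ℝ≥0∞) (hp1 : 1 ≤ p) (hpt : p ≠ ⊤)
    (hcon : 1/p + 1/q = 1) (hβ : -1 < (α - 1) * p.toReal) :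
    ∃ C > (0:ℝ), ∀ t > (0:ℝ), ∀ u : ℝ → U,
      AEStronglyMeasurable u (volume.restrict (Ioo (0:ℝ) t)) →
      eLpNorm u q (volume.restrict (Ioo (0:ℝ) t)) < ⊤ →
      IntegrableOn (fun s => Ψ (t - s) (u s)) (Ioo (0:ℝ) t) ∧
      (∫ s in Ioo (0:ℝ) t, ‖Ψ (t - s) (u s)‖)
        ≤ C * (eLpNorm u q (volume.restrict (Ioo (0:ℝ) t))).toReal := by
  obtain ⟨hα0, hα1⟩ := hα
  set pr := p.toReal with hprdef
  have hpr1 : 1 ≤ pr := by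
    have := ENNReal.toReal_mono hpt hp1
    simpa using this
  have hpr0 : 0 < pr := lt_of_lt_of_le one_pos hpr1
  set β := (α - 1) * pr with hβdef
  have hβ0 : β ≤ 0 := mul_nonpos_of_nonpos_of_nonneg (by linarith) (le_of_lt hpr0)
  set g : ℝ → ℝ := fun r => K * r ^ (α - 1) * Real.exp (ω * r) with hgdef
  have hgmeas : Measurable g := by
    rw [hgdef]; fun_prop
  -- the dominating function on (0, ∞)
  set G : ℝ → ℝ := fun r => K ^ pr * (r ^ β * Real.exp (pr * (ω * r))) with hGdef
  have hGmeas : Measurable G := by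
    rw [hGdef]; fun_prop
  have hGint : IntegrableOn G (Ioi (0:ℝ)) := by
    have hsplit : Ioc (0:ℝ) 1 ∪ Ioi 1 = Ioi 0 := Ioc_union_Ioi_eq_Ioi zero_le_one
    rw [← hsplit]
    apply IntegrableOn.union
    · -- on (0,1]
      rw [integrableOn_Ioc_iff_integrableOn_Ioo]
      have hbase : IntegrableOn (fun r : ℝ => K ^ pr * r ^ β) (Ioo (0:ℝ) 1) := by
        exact ((intervalIntegral.integrableOn_Ioo_rpow_iff zero_lt_one).mpr hβ).const_mul _
      apply hbase.mono' (hGmeas.aestronglyMeasurable.restrict)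
      filter_upwards [ae_restrict_mem measurableSet_Ioo] with r hr
      have hr0 : (0:ℝ) < r := hr.1
      have h1 : Real.exp (pr * (ω * r)) ≤ 1 := by
        rw [Real.exp_le_one_iff]
        have : ω * r < 0 := mul_neg_of_neg_of_pos hω hr0
        nlinarith
      have hrb : (0:ℝ) ≤ r ^ β := (Real.rpow_pos_of_pos hr0 β).le
      have : G r ≤ K ^ pr * r ^ β := by
        rw [hGdef]
        have hKpr : (0:ℝ) ≤ K ^ pr := Real.rpow_nonneg hK pr
        calc K ^ pr * (r ^ β * Real.exp (pr * (ω * r)))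
            ≤ K ^ pr * (r ^ β * 1) := by
              apply mul_le_mul_of_nonneg_left _ hKpr
              exact mul_le_mul_of_nonneg_left h1 hrb
          _ = K ^ pr * r ^ β := by ring
      have hG0 : 0 ≤ G r := by
        rw [hGdef]
        positivity
      rw [Real.norm_of_nonneg hG0]
      exact this
    · -- on (1,∞)
      have hbase : IntegrableOn (fun r : ℝ => K ^ pr * Real.exp (-(-(pr * ω)) * r)) (Ioi 1) := by
        apply Integrable.const_mul
        apply exp_neg_integrableOn_Ioi
        have : pr * ω < 0 := mul_neg_of_pos_of_neg hpr0 hω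
        linarith
      apply hbase.mono' (hGmeas.aestronglyMeasurable.restrict)
      filter_upwards [ae_restrict_mem measurableSet_Ioi] with r hr
      have hr1 : (1:ℝ) ≤ r := hr.le
      have hr0 : (0:ℝ) < r := lt_of_lt_of_le one_pos hr1
      have hKpr : (0:ℝ) ≤ K ^ pr := Real.rpow_nonneg hK pr
      have hrb : r ^ β ≤ 1 := Real.rpow_le_one_of_one_le_of_nonpos hr1 hβ0
      have hexp : (0:ℝ) < Real.exp (pr * (ω * r)) := Real.exp_pos _
      have heq : -(-(pr * ω)) * r = pr * (ω * r) := by ring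
      have hle : G r ≤ K ^ pr * Real.exp (-(-(pr * ω)) * r) := by
        rw [hGdef, heq]
        apply mul_le_mul_of_nonneg_left _ hKpr
        calc r ^ β * Real.exp (pr * (ω * r)) ≤ 1 * Real.exp (pr * (ω * r)) :=
              mul_le_mul_of_nonneg_right hrb hexp.le
          _ = Real.exp (pr * (ω * r)) := one_mul _
      have hG0 : 0 ≤ G r := by rw [hGdef]; positivity
      rw [Real.norm_of_nonneg hG0]
      exact hle
  -- pointwise identity: ‖g r‖ₑ ^ pr = ofReal (G r) on (0,∞)
  have hgG : ∀ r : ℝ, 0 < r → ((‖g r‖₊ : ℝ≥0∞)) ^ pr = ENNReal.ofReal (G r) := by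
    intro r hr
    have hg0 : 0 ≤ g r := by
      rw [hgdef]
      have := (Real.rpow_pos_of_pos hr (α - 1)).le
      positivity
    have : ((‖g r‖₊ : ℝ≥0∞)) = ENNReal.ofReal (g r) := by
      rw [← ofReal_norm_eq_coe_nnnorm, Real.norm_of_nonneg hg0]
    rw [this, ENNReal.ofReal_rpow_of_nonneg hg0 hpr0.le]
    congr 1
    simp only [hgdef, hGdef, hβdef]
    rw [Real.mul_rpow (by positivity) (Real.exp_pos _).le,
      Real.mul_rpow hK (Real.rpow_pos_of_pos hr (α - 1)).le,
      ← Real.rpow_mul hr.le, ← Real.exp_mul, mul_comm (ω * r) pr]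
    ring
  -- the constant
  set Ce : ℝ≥0∞ := (∫⁻ r in Ioi (0:ℝ), ((‖g r‖₊ : ℝ≥0∞)) ^ pr) ^ (1/pr) with hCedef
  have hCelt : Ce < ⊤ := by
    rw [hCedef]
    apply ENNReal.rpow_lt_top_of_nonneg (by positivity)
    have hle : (∫⁻ r in Ioi (0:ℝ), ((‖g r‖₊ : ℝ≥0∞)) ^ pr)
        ≤ ∫⁻ r in Ioi (0:ℝ), (‖G r‖₊ : ℝ≥0∞) := by
      apply lintegral_mono_ae
      filter_upwards [ae_restrict_mem measurableSet_Ioi] with r hr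
      rw [hgG r hr, ← ofReal_norm_eq_coe_nnnorm]
      exact ENNReal.ofReal_le_ofReal (le_abs_self _)
    exact (lt_of_le_of_lt hle hGint.2).ne
  refine ⟨Ce.toReal + 1, by positivity, ?_⟩
  intro t ht u hu hLq
  set μt := volume.restrict (Ioo (0:ℝ) t) with hμt
  have hFaesm : AEStronglyMeasurable (fun s => Ψ (t - s) (u s)) μt :=
    aux_aesm Ψ hΨcont t u hu
  set φ : ℝ → ℝ := fun s => g (t - s) with hφdef
  have hφaesm : AEStronglyMeasurable φ μt :=
    ((hgmeas.comp (measurable_const.sub measurable_id))).aestronglyMeasurable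
  have hp0 : p ≠ 0 := by
    intro h; rw [h] at hp1; simp at hp1
  have hold : eLpNorm (φ • u) 1 μt ≤ eLpNorm φ p μt * eLpNorm u q μt := by
    apply eLpNorm_smul_le_mul_eLpNorm (hpqr := ?_) hu hφaesm
    exact ⟨by simpa using hcon⟩
  have hcv : eLpNorm φ p μt ≤ Ce := by
    rw [eLpNorm_eq_lintegral_rpow_enorm_toReal hp0 hpt, hCedef, ← hprdef]
    apply ENNReal.rpow_le_rpow _ (by positivity)
    have hmp : MeasurePreserving (fun s : ℝ => t - s) volume volume :=
      Measure.measurePreserving_sub_left volume t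
    have hemb : MeasurableEmbedding (fun s : ℝ => t - s) :=
      (Homeomorph.measurableEmbedding (IsometryEquiv.subLeft t).toHomeomorph)
    have hpre : (fun s : ℝ => t - s) ⁻¹' (Ioo 0 t) = Ioo 0 t := by
      ext s
      simp only [mem_preimage, mem_Ioo]
      constructor <;> rintro ⟨h1, h2⟩ <;> constructor <;> linarith
    calc ∫⁻ s in Ioo (0:ℝ) t, (‖φ s‖₊ : ℝ≥0∞) ^ pr
        = ∫⁻ r in Ioo (0:ℝ) t, (‖g r‖₊ : ℝ≥0∞) ^ pr := by
          have h := hmp.setLIntegral_comp_preimage_emb hemb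
            (fun r => (‖g r‖₊ : ℝ≥0∞) ^ pr) (Ioo 0 t)
          rw [hpre] at h
          exact h
      _ ≤ ∫⁻ r in Ioi (0:ℝ), (‖g r‖₊ : ℝ≥0∞) ^ pr :=
          lintegral_mono_set Ioo_subset_Ioi_self
  have hptwise : ∀ᵐ s ∂μt, (‖Ψ (t - s) (u s)‖₊ : ℝ≥0∞) ≤ (‖(φ • u) s‖₊ : ℝ≥0∞) := by
    rw [hμt]
    filter_upwards [ae_restrict_mem measurableSet_Ioo] with s hs
    have hts : 0 < t - s := by linarith [hs.2]
    have hφ0 : 0 ≤ φ s := by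
      simp only [hφdef, hgdef]
      have := (Real.rpow_pos_of_pos hts (α - 1)).le
      positivity
    have hnorm : ‖Ψ (t - s) (u s)‖ ≤ ‖(φ • u) s‖ := by
      have h1 : ‖Ψ (t - s) (u s)‖ ≤ ‖Ψ (t - s)‖ * ‖u s‖ := (Ψ (t - s)).le_opNorm _
      have h2 : ‖Ψ (t - s)‖ * ‖u s‖ ≤ φ s * ‖u s‖ :=
        mul_le_mul_of_nonneg_right (hΨbound _ hts) (norm_nonneg _)
      have h3 : ‖(φ • u) s‖ = φ s * ‖u s‖ := by
        simp only [Pi.smul_apply', norm_smul, Real.norm_of_nonneg hφ0]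
      rw [h3]; exact h1.trans h2
    rw [← ofReal_norm_eq_coe_nnnorm, ← ofReal_norm_eq_coe_nnnorm]
    exact ENNReal.ofReal_le_ofReal hnorm
  have hlin : (∫⁻ s, (‖Ψ (t - s) (u s)‖₊ : ℝ≥0∞) ∂μt) ≤ Ce * eLpNorm u q μt := by
    calc (∫⁻ s, (‖Ψ (t - s) (u s)‖₊ : ℝ≥0∞) ∂μt)
        ≤ ∫⁻ s, (‖(φ • u) s‖₊ : ℝ≥0∞) ∂μt := lintegral_mono_ae hptwise
      _ = eLpNorm (φ • u) 1 μt := (eLpNorm_one_eq_lintegral_enorm (f := φ • u)).symm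
      _ ≤ eLpNorm φ p μt * eLpNorm u q μt := hold
      _ ≤ Ce * eLpNorm u q μt := mul_le_mul_left hcv _
  have hfin : (∫⁻ s, (‖Ψ (t - s) (u s)‖₊ : ℝ≥0∞) ∂μt) < ⊤ :=
    lt_of_le_of_lt hlin (ENNReal.mul_lt_top hCelt hLq)
  have hInt : IntegrableOn (fun s => Ψ (t - s) (u s)) (Ioo (0:ℝ) t) := ⟨hFaesm, hfin⟩
  refine ⟨hInt, ?_⟩
  have heq : (∫ s in Ioo (0:ℝ) t, ‖Ψ (t - s) (u s)‖)
      = (∫⁻ s, (‖Ψ (t - s) (u s)‖₊ : ℝ≥0∞) ∂μt).toReal :=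
    integral_norm_eq_lintegral_enorm hFaesm
  rw [heq]
  have h1 : (∫⁻ s, (‖Ψ (t - s) (u s)‖₊ : ℝ≥0∞) ∂μt).toReal
      ≤ (Ce * eLpNorm u q μt).toReal :=
    ENNReal.toReal_mono (ENNReal.mul_ne_top hCelt.ne hLq.ne) hlin
  rw [ENNReal.toReal_mul] at h1
  apply h1.trans
  apply mul_le_mul_of_nonneg_right _ ENNReal.toReal_nonneg
  linarith

end Aux

/-- quantitative core of the proposition on `L^q`-ISS for analytic
semigroups. If `Ψ : (0,∞) → L(U,X)` is strongly continuous with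
`‖Ψ(r)‖ ≤ K r^{α−1} e^{ωr}` for `ω < 0`, `α ∈ (0,1]`, then for every
`q ∈ (1/α, ∞]` there is a constant `C > 0`, independent of `t`, such that for all
`t > 0` and `u ∈ L^q(0,t;U)` the Bochner integral `∫₀ᵗ Ψ(t−s)u(s) ds` converges in
`X` and `∫₀ᵗ ‖Ψ(t−s)u(s)‖ ds ≤ C ‖u‖_{L^q(0,t;U)}`. -/


theorem stmt_5
    (X U : Type*) [NormedAddCommGroup X] [NormedSpace ℝ X] [CompleteSpace X]
    [NormedAddCommGroup U] [NormedSpace ℝ U] [CompleteSpace U]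
    (α ω K : ℝ) (hα : α ∈ Ioc (0:ℝ) 1) (hω : ω < 0) (hK : 0 ≤ K)
    (Ψ : ℝ → U →L[ℝ] X)
    (hΨcont : ∀ v : U, ContinuousOn (fun r => Ψ r v) (Ioi 0))
    (hΨbound : ∀ r > (0:ℝ), ‖Ψ r‖ ≤ K * r ^ (α - 1) * Real.exp (ω * r))
    (q : ℝ≥0∞) (hq : ENNReal.ofReal (1 / α) < q) :
    ∃ C > (0:ℝ), ∀ t > (0:ℝ), ∀ u : ℝ → U,
      AEStronglyMeasurable u (volume.restrict (Ioo (0:ℝ) t)) →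
      eLpNorm u q (volume.restrict (Ioo (0:ℝ) t)) < ⊤ →
      IntegrableOn (fun s => Ψ (t - s) (u s)) (Ioo (0:ℝ) t) ∧
      (∫ s in Ioo (0:ℝ) t, ‖Ψ (t - s) (u s)‖)
        ≤ C * (eLpNorm u q (volume.restrict (Ioo (0:ℝ) t))).toReal := by
  obtain ⟨hα0, hα1⟩ := hα
  by_cases hqt : q = ⊤
  · subst hqt
    apply aux_key α ω K ⟨hα0, hα1⟩ hω hK Ψ hΨcont hΨbound ⊤ 1 le_rfl one_ne_top
    · simp
    · simpa using hα0
  · set qr := q.toReal with hqrdef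
    have h1α : 1 ≤ 1/α := by
      rw [le_div_iff₀ hα0]; linarith
    have hqr : 1/α < qr :=
      (ENNReal.ofReal_lt_iff_lt_toReal (by positivity) hqt).mp hq
    have hqr1 : 1 < qr := lt_of_le_of_lt h1α hqr
    have hqrm1 : 0 < qr - 1 := by linarith
    set pr := qr / (qr - 1) with hprdef
    have hpr1 : 1 < pr := by
      rw [hprdef, lt_div_iff₀ hqrm1]; linarith
    have hpr0 : 0 < pr := lt_trans one_pos hpr1
    have hαqr : 1 < α * qr := by
      have h' : α * (1/α) < α * qr := by
        exact mul_lt_mul_of_pos_left hqr hα0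
      rwa [mul_one_div, div_self (ne_of_gt hα0)] at h'
    apply aux_key α ω K ⟨hα0, hα1⟩ hω hK Ψ hΨcont hΨbound q (ENNReal.ofReal pr)
    · exact ENNReal.one_le_ofReal.mpr hpr1.le
    · exact ENNReal.ofReal_ne_top
    · -- 1/ofReal pr + 1/q = 1
      have hqe : q = ENNReal.ofReal qr := (ENNReal.ofReal_toReal hqt).symm
      have hqr0 : (0:ℝ) < qr := lt_trans one_pos hqr1
      rw [hqe, one_div, one_div, ← ENNReal.ofReal_inv_of_pos hpr0,
        ← ENNReal.ofReal_inv_of_pos hqr0,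
        ← ENNReal.ofReal_add (by positivity) (by positivity)]
      rw [show pr⁻¹ + qr⁻¹ = 1 by
        rw [hprdef]; field_simp; ring]
      exact ENNReal.ofReal_one
    · rw [ENNReal.toReal_ofReal hpr0.le]
      have key : -1 < ((α - 1) * qr) / (qr - 1) := by
        rw [lt_div_iff₀ hqrm1]; nlinarith
      have : (α - 1) * pr = ((α - 1) * qr) / (qr - 1) := by
        rw [hprdef]; ring
      rw [this]; exact key
end

section
/- Let X be a Banach space, M ≥ 1, ω < 0, L > 0 and σ ≥ 0 with ω + M·L < 0. Let T : [0,∞) → L(X) be such that t ↦ T(t)y is continuous for every y ∈ X and ‖T(t)‖ ≤ M e^{ωt} for all t ≥ 0. Let f : [0,∞) × X → X be continuous in the first variable and satisfy ‖f(t,y) − f(t,z)‖ ≤ L‖y − z‖ for all t ≥ 0, y, z ∈ X, and f(t,0) = 0 for all t ≥ 0. Let c₀ ≥ 0, let k : [0,∞) → [0,∞) be nondecreasing, and let g : [0,∞) → X be continuous with ‖g(t)‖ ≤ M e^{ωt} c₀ + σ·k(t) for all t ≥ 0. If x : [0,∞) → X is continuous and satisfies x(t) = g(t) + ∫₀ᵗ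 T(t−s) f(s, x(s)) ds for all t ≥ 0, then for all t ≥ 0: ‖x(t)‖ ≤ M e^{(ω+ML)t} c₀ + (1 + ML/(−(ω+ML)))·σ·k(t). -/
open MeasureTheory Set

private theorem aux_cont (X : Type*) [NormedAddCommGroup X] [NormedSpace ℝ X]
    (L : ℝ) (f : ℝ → X → X) (x : ℝ → X) (hx : Continuous x)
    (hfcont : ∀ y : X, Continuous fun t => f t y)
    (hflip : ∀ t ≥ (0:ℝ), ∀ y z : X, ‖f t y - f t z‖ ≤ L * ‖y - z‖) :
    ContinuousOn (fun s => f s (x s)) (Ici 0) := by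
  intro s₀ hs₀
  have h2 : Filter.Tendsto (fun s => f s (x s) - f s (x s₀)) (nhdsWithin s₀ (Ici 0)) (nhds 0) := by
    have hb : ∀ᶠ s in nhdsWithin s₀ (Ici 0), ‖f s (x s) - f s (x s₀)‖ ≤ L * ‖x s - x s₀‖ := by
      filter_upwards [self_mem_nhdsWithin] with s hs
      exact hflip s hs _ _
    have hg : Filter.Tendsto (fun s => L * ‖x s - x s₀‖) (nhdsWithin s₀ (Ici 0)) (nhds 0) := by
      have : Filter.Tendsto (fun s => L * ‖x s - x s₀‖) (nhds s₀) (nhds (L * ‖x s₀ - x s₀‖)) :=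
        (continuous_const.mul ((hx.sub continuous_const).norm)).tendsto s₀
      simpa using this.mono_left nhdsWithin_le_nhds
    exact squeeze_zero_norm' hb hg
  have h1 : Filter.Tendsto (fun s => f s (x s₀)) (nhdsWithin s₀ (Ici 0)) (nhds (f s₀ (x s₀))) :=
    ((hfcont (x s₀)).tendsto s₀).mono_left nhdsWithin_le_nhds
  have := h2.add h1
  simp only [sub_add_cancel, zero_add] at this
  exact this

private theorem aux_cont2 (X : Type*) [NormedAddCommGroup X] [NormedSpace ℝ X]
    (M : ℝ) (T : ℝ → X →L[ℝ] X)
    (hTcont : ∀ y : X, Continuous fun t => T t y)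
    (hTb : ∀ r ≥ (0:ℝ), ‖T r‖ ≤ M)
    (F : ℝ → X) (hF : ContinuousOn F (Ici 0)) (t : ℝ) :
    ContinuousOn (fun s => T (t - s) (F s)) (Icc 0 t) := by
  intro s₀ hs₀
  have hFc : Filter.Tendsto F (nhdsWithin s₀ (Icc 0 t)) (nhds (F s₀)) :=
    (hF s₀ hs₀.1).mono_left (nhdsWithin_mono _ (fun r hr => hr.1))
  have h2 : Filter.Tendsto (fun s => T (t - s) (F s) - T (t - s) (F s₀))
      (nhdsWithin s₀ (Icc 0 t)) (nhds 0) := by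
    have hb : ∀ᶠ s in nhdsWithin s₀ (Icc 0 t),
        ‖T (t - s) (F s) - T (t - s) (F s₀)‖ ≤ M * ‖F s - F s₀‖ := by
      filter_upwards [self_mem_nhdsWithin] with s hs
      calc ‖T (t - s) (F s) - T (t - s) (F s₀)‖ = ‖T (t - s) (F s - F s₀)‖ := by
            rw [map_sub]
        _ ≤ ‖T (t - s)‖ * ‖F s - F s₀‖ := (T (t - s)).le_opNorm _
        _ ≤ M * ‖F s - F s₀‖ :=
            mul_le_mul_of_nonneg_right (hTb _ (by linarith [hs.2])) (norm_nonneg _)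
    have hg : Filter.Tendsto (fun s => M * ‖F s - F s₀‖) (nhdsWithin s₀ (Icc 0 t)) (nhds 0) := by
      have h := ((hFc.sub (tendsto_const_nhds (x := F s₀))).norm.const_mul M)
      simpa using h
    exact squeeze_zero_norm' hb hg
  have h1 : Filter.Tendsto (fun s => T (t - s) (F s₀))
      (nhdsWithin s₀ (Icc 0 t)) (nhds (T (t - s₀) (F s₀))) :=
    (((hTcont (F s₀)).comp (continuous_const.sub continuous_id)).tendsto s₀).mono_left
      nhdsWithin_le_nhds
  have := h2.add h1
  simp only [sub_add_cancel, zero_add] at this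
  exact this

private theorem aux_gronwall (u : ℝ → ℝ) (hu : Continuous u) (C t : ℝ) (ht : 0 ≤ t)
    (V V' : ℝ → ℝ) (hV : ∀ s, HasDerivAt V (V' s) s) (hV0 : V 0 = 0)
    (hkey : ∀ s ∈ Icc (0:ℝ) t, u s ≤ (V' s - C * V s) + C * ∫ r in (0:ℝ)..s, u r) :
    (∫ r in (0:ℝ)..t, u r) ≤ V t := by
  set W : ℝ → ℝ := fun s => ∫ r in (0:ℝ)..s, u r with hW
  have hWd : ∀ s, HasDerivAt W (u s) s := fun s =>
    (hu.integral_hasStrictDerivAt 0 s).hasDerivAt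
  set D : ℝ → ℝ := fun s => W s - V s with hD
  have hDd : ∀ s, HasDerivAt D (u s - V' s) s := fun s => (hWd s).sub (hV s)
  have hDcont : ContinuousOn D (Icc 0 t) :=
    (Differentiable.continuous fun s => (hDd s).differentiableAt).continuousOn
  have hres := le_gronwallBound_of_liminf_deriv_right_le (f := D) (f' := fun s => u s - V' s)
    (δ := 0) (K := C) (ε := 0) (a := 0) (b := t) hDcont
    (fun s hs r hr => ((hDd s).hasDerivWithinAt).liminf_right_slope_le hr)
    (by simp [hD, hW, hV0])
    (fun s hs => by
      have h := hkey s (Ico_subset_Icc_self hs)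
      simp only [hD]
      linarith)
  have := hres t (right_mem_Icc.2 ht)
  rw [sub_zero, gronwallBound_ε0_δ0] at this
  simp only [hD, hW] at this
  linarith


/-- ISS estimate for semilinear systems with a globally Lipschitz
nonlinearity of small Lipschitz constant. If `‖T(t)‖ ≤ M e^{ωt}`, `f` has Lipschitz
constant `L` with `f(t,0) = 0` and `ω + ML < 0`, `‖g(t)‖ ≤ M e^{ωt} c₀ + σ k(t)`
with `k` nondecreasing, then any continuous solution of
`x(t) = g(t) + ∫₀ᵗ T(t−s) f(s,x(s)) ds` satisfies
`‖x(t)‖ ≤ M e^{(ω+ML)t} c₀ + (1 + ML/(−(ω+ML))) σ k(t)`. -/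
theorem stmt_6
    (X : Type*) [NormedAddCommGroup X] [NormedSpace ℝ X] [CompleteSpace X]
    (M ω L σ : ℝ) (hM : 1 ≤ M) (hω : ω < 0) (hL : 0 < L) (hσ : 0 ≤ σ)
    (hωML : ω + M * L < 0)
    (T : ℝ → X →L[ℝ] X)
    (hTcont : ∀ y : X, Continuous fun t => T t y)
    (hTbound : ∀ t ≥ (0:ℝ), ‖T t‖ ≤ M * Real.exp (ω * t))
    (f : ℝ → X → X)
    (hfcont : ∀ y : X, Continuous fun t => f t y)
    (hflip : ∀ t ≥ (0:ℝ), ∀ y z : X, ‖f t y - f t z‖ ≤ L * ‖y - z‖)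
    (hf0 : ∀ t ≥ (0:ℝ), f t 0 = 0)
    (c₀ : ℝ) (hc₀ : 0 ≤ c₀)
    (k : ℝ → ℝ) (hkmono : MonotoneOn k (Ici 0)) (hknn : ∀ t ≥ (0:ℝ), 0 ≤ k t)
    (g : ℝ → X) (hg : Continuous g)
    (hgbound : ∀ t ≥ (0:ℝ), ‖g t‖ ≤ M * Real.exp (ω * t) * c₀ + σ * k t)
    (x : ℝ → X) (hx : Continuous x)
    (hxeq : ∀ t ≥ (0:ℝ), x t = g t + ∫ s in (0:ℝ)..t, T (t - s) (f s (x s))) :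
    ∀ t ≥ (0:ℝ),
      ‖x t‖ ≤ M * Real.exp ((ω + M * L) * t) * c₀
        + (1 + M * L / (-(ω + M * L))) * σ * k t := by
  intro t ht
  have hM0 : (0:ℝ) < M := lt_of_lt_of_le one_pos hM
  have hC : (0:ℝ) < M * L := mul_pos hM0 hL
  have hCne : M * L ≠ 0 := ne_of_gt hC
  have hμne : ω + M * L ≠ 0 := ne_of_lt hωML
  have hB : (0:ℝ) ≤ σ * k t := mul_nonneg hσ (hknn t ht)
  -- uniform bound on T on [0,∞)
  have hTb1 : ∀ r ≥ (0:ℝ), ‖T r‖ ≤ M := by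
    intro r hr
    have h1 : Real.exp (ω * r) ≤ 1 := by
      rw [show (1:ℝ) = Real.exp 0 by rw [Real.exp_zero]]
      exact Real.exp_le_exp.2 (by nlinarith)
    calc ‖T r‖ ≤ M * Real.exp (ω * r) := hTbound r hr
      _ ≤ M * 1 := by nlinarith
      _ = M := mul_one M
  have hFcont : ContinuousOn (fun s => f s (x s)) (Ici 0) :=
    aux_cont X L f x hx hfcont hflip
  set u : ℝ → ℝ := fun s => Real.exp (-ω * s) * ‖x s‖ with hu_def
  have hu_val : ∀ r, u r = Real.exp (-ω * r) * ‖x r‖ := fun r => rfl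
  have hu : Continuous u := by
    exact (Real.continuous_exp.comp (continuous_const.mul continuous_id)).mul hx.norm
  -- main integral inequality, exponentially weighted
  have hstep : ∀ s ∈ Icc (0:ℝ) t,
      u s ≤ M * c₀ + σ * k t * Real.exp (-ω * s) + M * L * ∫ r in (0:ℝ)..s, u r := by
    intro s hs
    have hGc : ContinuousOn (fun r => T (s - r) (f r (x r))) (Icc 0 s) :=
      aux_cont2 X M T hTcont hTb1 _ hFcont s
    have hGint : IntervalIntegrable (fun r => T (s - r) (f r (x r))) volume 0 s :=
      (by rwa [uIcc_of_le hs.1] : ContinuousOn (fun r => T (s - r) (f r (x r)))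
        (uIcc 0 s)).intervalIntegrable
    have hptw : ∀ r ∈ Icc (0:ℝ) s,
        ‖T (s - r) (f r (x r))‖ ≤ (M * L * Real.exp (ω * s)) * u r := by
      intro r hr
      have hfr : ‖f r (x r)‖ ≤ L * ‖x r‖ := by
        have h := hflip r hr.1 (x r) 0
        rwa [hf0 r hr.1, sub_zero, sub_zero] at h
      calc ‖T (s - r) (f r (x r))‖ ≤ ‖T (s - r)‖ * ‖f r (x r)‖ := (T (s - r)).le_opNorm _
        _ ≤ (M * Real.exp (ω * (s - r))) * (L * ‖x r‖) :=
            mul_le_mul (hTbound _ (by linarith [hr.2])) hfr (norm_nonneg _) (by positivity)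
        _ = (M * L * Real.exp (ω * s)) * u r := by
            rw [hu_val, show ω * (s - r) = ω * s + -ω * r by ring, Real.exp_add]
            ring
    have h2 : ‖∫ r in (0:ℝ)..s, T (s - r) (f r (x r))‖
        ≤ (M * L * Real.exp (ω * s)) * ∫ r in (0:ℝ)..s, u r := by
      calc ‖∫ r in (0:ℝ)..s, T (s - r) (f r (x r))‖
          ≤ ∫ r in (0:ℝ)..s, ‖T (s - r) (f r (x r))‖ :=
            intervalIntegral.norm_integral_le_integral_norm hs.1
        _ ≤ ∫ r in (0:ℝ)..s, (M * L * Real.exp (ω * s)) * u r :=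
            intervalIntegral.integral_mono_on hs.1 hGint.norm
              ((continuous_const.mul hu).intervalIntegrable 0 s) hptw
        _ = (M * L * Real.exp (ω * s)) * ∫ r in (0:ℝ)..s, u r :=
            intervalIntegral.integral_const_mul _ _
    have h1 : ‖x s‖ ≤ (M * Real.exp (ω * s) * c₀ + σ * k s)
        + (M * L * Real.exp (ω * s)) * ∫ r in (0:ℝ)..s, u r := by
      rw [hxeq s hs.1]
      exact (norm_add_le _ _).trans (add_le_add (hgbound s hs.1) h2)
    have e1 : Real.exp (-ω * s) * Real.exp (ω * s) = 1 := by
      rw [← Real.exp_add]; norm_num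
    have hks : k s ≤ k t := hkmono hs.1 (mem_Ici.2 ht) hs.2
    set I := ∫ r in (0:ℝ)..s, u r with hI
    have step := mul_le_mul_of_nonneg_left h1 (Real.exp_nonneg (-ω * s))
    have expand : Real.exp (-ω * s) * ((M * Real.exp (ω * s) * c₀ + σ * k s)
        + (M * L * Real.exp (ω * s)) * I)
        = M * c₀ + σ * k s * Real.exp (-ω * s) + M * L * I := by
      linear_combination (M * c₀ + M * L * I) * e1
    have hk2 : σ * k s * Real.exp (-ω * s) ≤ σ * k t * Real.exp (-ω * s) := by
      have h0 : 0 ≤ σ * Real.exp (-ω * s) * (k t - k s) :=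
        mul_nonneg (mul_nonneg hσ (Real.exp_nonneg _)) (by linarith)
      nlinarith
    rw [hu_val]
    linarith [expand ▸ step]
  -- the comparison function and its derivative
  set V : ℝ → ℝ := fun s => M * c₀ * (Real.exp (M * L * s) - 1) / (M * L)
      + σ * k t * (Real.exp (M * L * s) - Real.exp (-ω * s)) / (ω + M * L) with hV_def
  set V' : ℝ → ℝ := fun s => M * c₀ * Real.exp (M * L * s)
      + σ * k t * (M * L * Real.exp (M * L * s) + ω * Real.exp (-ω * s)) / (ω + M * L)
      with hV'_def
  have hVd : ∀ s, HasDerivAt V (V' s) s := by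
    intro s
    have h1 : HasDerivAt (fun s : ℝ => Real.exp (M * L * s)) (Real.exp (M * L * s) * (M * L)) s := by
      simpa using ((hasDerivAt_id s).const_mul (M * L)).exp
    have h2 : HasDerivAt (fun s : ℝ => Real.exp (-ω * s)) (Real.exp (-ω * s) * -ω) s := by
      simpa using ((hasDerivAt_id s).const_mul (-ω)).exp
    have h := (((h1.sub_const 1).const_mul (M * c₀)).div_const (M * L)).add
      (((h1.sub h2).const_mul (σ * k t)).div_const (ω + M * L))
    refine h.congr_deriv ?_
    simp only [hV'_def]
    field_simp
    ring
  have hV0 : V 0 = 0 := by simp [hV_def]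
  have hkey : ∀ s ∈ Icc (0:ℝ) t,
      u s ≤ (V' s - M * L * V s) + M * L * ∫ r in (0:ℝ)..s, u r := by
    intro s hs
    have hident : V' s - M * L * V s = M * c₀ + σ * k t * Real.exp (-ω * s) := by
      simp only [hV_def, hV'_def]
      field_simp
      ring
    rw [hident]
    exact hstep s hs
  have hVt : (∫ r in (0:ℝ)..t, u r) ≤ V t := aux_gronwall u hu (M * L) t ht V V' hVd hV0 hkey
  have hut : u t ≤ M * c₀ + σ * k t * Real.exp (-ω * t) + M * L * V t := by
    have h := hstep t ⟨ht, le_refl t⟩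
    nlinarith [mul_le_mul_of_nonneg_left hVt (le_of_lt hC)]
  -- final algebra
  have f2 : Real.exp (-ω * t) * Real.exp (ω * t) = 1 := by
    rw [← Real.exp_add]; norm_num
  have hxu : ‖x t‖ = Real.exp (ω * t) * u t := by
    rw [hu_val]
    linear_combination -‖x t‖ * f2
  have step2 : Real.exp (ω * t) * (M * c₀ + σ * k t * Real.exp (-ω * t) + M * L * V t)
      = M * c₀ * (Real.exp (ω * t) * Real.exp (M * L * t))
        + σ * k t * (Real.exp (-ω * t) * Real.exp (ω * t))
        + M * L * (σ * k t) * ((Real.exp (ω * t) * Real.exp (M * L * t)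
          - Real.exp (-ω * t) * Real.exp (ω * t)) / (ω + M * L)) := by
    simp only [hV_def]
    field_simp
    ring
  rw [f2] at step2
  have f1 : Real.exp ((ω + M * L) * t) = Real.exp (ω * t) * Real.exp (M * L * t) := by
    rw [← Real.exp_add]; ring_nf
  have h5 : M * L * (σ * k t) * ((Real.exp (ω * t) * Real.exp (M * L * t) - 1) / (ω + M * L))
      ≤ M * L * (σ * k t) * (1 / (-(ω + M * L))) := by
    apply mul_le_mul_of_nonneg_left _ (by positivity)
    rw [show (Real.exp (ω * t) * Real.exp (M * L * t) - 1) / (ω + M * L)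
        = (1 - Real.exp (ω * t) * Real.exp (M * L * t)) / (-(ω + M * L)) by
      rw [div_eq_div_iff hμne (by linarith)]; ring]
    gcongr
    · linarith
    · nlinarith [Real.exp_pos (ω * t), Real.exp_pos (M * L * t)]
  have hle : Real.exp (ω * t) * u t
      ≤ Real.exp (ω * t) * (M * c₀ + σ * k t * Real.exp (-ω * t) + M * L * V t) :=
    mul_le_mul_of_nonneg_left hut (Real.exp_nonneg _)
  rw [hxu]
  rw [f1]
  have target_eq : M * (Real.exp (ω * t) * Real.exp (M * L * t)) * c₀
      + (1 + M * L / (-(ω + M * L))) * σ * k t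
      = M * c₀ * (Real.exp (ω * t) * Real.exp (M * L * t)) + σ * k t * 1
        + M * L * (σ * k t) * (1 / (-(ω + M * L))) := by
    field_simp
    ring
  rw [target_eq]
  linarith [step2 ▸ hle]
end

section
/- Let x = (xₙ)_{n≥1} be a square-summable sequence of complex numbers and let c, c̃ ∈ ℂ. If both sequences (−2ⁿ xₙ + c·2ⁿ/n)_{n≥1} and (−2ⁿ xₙ + c̃·2ⁿ/n)_{n≥1} are square-summable, then c = c̃. -/
set_option maxHeartbeats 1000000


/-- well-definedness of the boundary operator in the example of a
boundary control system on `ℓ²(ℕ)`. If `x = (xₙ)_{n≥1}` is square-summable and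
both `(−2ⁿxₙ + c·2ⁿ/n)_{n≥1}` and `(−2ⁿxₙ + c̃·2ⁿ/n)_{n≥1}` are square-summable,
then `c = c̃`. -/
theorem stmt_13 (x : ℕ → ℂ) (c c' : ℂ)
    (hx : Summable fun n : ℕ => ‖x (n + 1)‖ ^ 2)
    (h1 : Summable fun n : ℕ =>
      ‖-(2:ℂ) ^ (n + 1) * x (n + 1) + c * 2 ^ (n + 1) / (n + 1)‖ ^ 2)
    (h2 : Summable fun n : ℕ =>
      ‖-(2:ℂ) ^ (n + 1) * x (n + 1) + c' * 2 ^ (n + 1) / (n + 1)‖ ^ 2) :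
    c = c' := by
  set a : ℕ → ℂ := fun n => -(2:ℂ) ^ (n + 1) * x (n + 1) + c * 2 ^ (n + 1) / (n + 1) with ha
  set b : ℕ → ℂ := fun n => -(2:ℂ) ^ (n + 1) * x (n + 1) + c' * 2 ^ (n + 1) / (n + 1) with hb
  have hdiff : Summable fun n => ‖a n - b n‖ ^ 2 := by
    have hle : ∀ n, ‖a n - b n‖ ^ 2 ≤ 2 * ‖a n‖ ^ 2 + 2 * ‖b n‖ ^ 2 := by
      intro n
      have h := norm_sub_le (a n) (b n)
      nlinarith [norm_nonneg (a n), norm_nonneg (b n), sq_nonneg (‖a n‖ - ‖b n‖),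
        norm_nonneg (a n - b n)]
    exact Summable.of_nonneg_of_le (fun n => by positivity) hle
      ((h1.mul_left 2).add (h2.mul_left 2))
  have key : ∀ n : ℕ, ‖c - c'‖ ^ 2 ≤ ‖a n - b n‖ ^ 2 := by
    intro n
    have hab : a n - b n = (c - c') * ((2:ℂ) ^ (n + 1) / (n + 1)) := by
      rw [ha, hb]
      have hn : ((n:ℂ) + 1) ≠ 0 := Nat.cast_add_one_ne_zero n
      field_simp
      ring
    rw [hab, norm_mul, mul_pow]
    have h1' : (1 : ℝ) ≤ ‖(2:ℂ) ^ (n + 1) / (n + 1)‖ := by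
      rw [norm_div, norm_pow]
      have hnc : ‖((n:ℂ) + 1)‖ = (n : ℝ) + 1 := by
        have := Complex.norm_natCast (n + 1)
        push_cast at this
        linarith
      rw [hnc]
      have hn : (0:ℝ) < (n:ℝ) + 1 := by positivity
      rw [le_div_iff₀ hn, one_mul]
      calc (n : ℝ) + 1 ≤ 2 ^ (n + 1) := by
            exact_mod_cast (Nat.lt_two_pow_self (n := n + 1)).le
        _ ≤ ‖(2:ℂ)‖ ^ (n + 1) := by norm_num
    have ht2 : (1:ℝ) ≤ ‖(2:ℂ) ^ (n + 1) / (n + 1)‖ ^ 2 := by nlinarith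
    exact le_mul_of_one_le_right (sq_nonneg _) ht2
  have hconst : Summable fun _ : ℕ => ‖c - c'‖ ^ 2 :=
    Summable.of_nonneg_of_le (fun n => by positivity) key hdiff
  have := summable_const_iff (‖c - c'‖ ^ 2) |>.mp hconst
  have : ‖c - c'‖ = 0 := by nlinarith [norm_nonneg (c - c')]
  simpa [sub_eq_zero] using this
end

section
/- There exist constants ω > 0 and C > 0 such that for every continuous input u : [0,∞) → ℝ, every initial datum x₀ ∈ C([0,1]) and every classical solution x of the Neumann boundary-controlled semilinear heat equation on [0,1] with nonlinearity f(r) = −r − r³, boundary input u and initial datum x₀, one has for all t > 0: ∫₀¹ x(ξ,t)² dξ ≤ e^{−ωt} ∫₀¹ x₀(ξ)² dξ + C ∫₀ᵗ e^{−ω(t−s)} u(s)² ds. -/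
open MeasureTheory Set
open scoped Interval

lemma my_sq_integral_le (g : ℝ → ℝ) (hg : ContinuousOn g (Icc 0 1)) :
    (∫ ξ in (0:ℝ)..1, g ξ)^2 ≤ ∫ ξ in (0:ℝ)..1, (g ξ)^2 := by
  have huIcc : uIcc (0:ℝ) 1 = Icc 0 1 := uIcc_of_le zero_le_one
  set c := ∫ ξ in (0:ℝ)..1, g ξ with hc
  have hgI : IntervalIntegrable g volume 0 1 := (huIcc ▸ hg).intervalIntegrable
  have hg2I : IntervalIntegrable (fun ξ => (g ξ)^2) volume 0 1 :=
    ((huIcc ▸ hg).pow 2).intervalIntegrable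
  have h0 : (0:ℝ) ≤ ∫ ξ in (0:ℝ)..1, (g ξ - c)^2 :=
    intervalIntegral.integral_nonneg zero_le_one (fun ξ _ => sq_nonneg _)
  have hexp : (∫ ξ in (0:ℝ)..1, (g ξ - c)^2)
      = (∫ ξ in (0:ℝ)..1, (g ξ)^2) - c^2 := by
    have : ∀ ξ : ℝ, (g ξ - c)^2 = (g ξ)^2 - 2*c*(g ξ) + c^2 := fun ξ => by ring
    simp_rw [this]
    rw [intervalIntegral.integral_add ((hg2I.sub (hgI.const_mul (2*c)))) intervalIntegrable_const,
        intervalIntegral.integral_sub hg2I (hgI.const_mul (2*c)),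
        intervalIntegral.integral_const_mul, intervalIntegral.integral_const]
    simp [← hc]
    ring
  linarith [hexp ▸ h0]

lemma my_ftc (f f' : ℝ → ℝ) (hf : ContinuousOn f (Icc 0 1))
    (hd : ∀ ξ ∈ Icc (0:ℝ) 1, HasDerivWithinAt f (f' ξ) (Icc 0 1) ξ)
    (hf' : ContinuousOn f' (Icc 0 1)) :
    ∫ ξ in (0:ℝ)..1, f' ξ = f 1 - f 0 := by
  have huIcc : uIcc (0:ℝ) 1 = Icc 0 1 := uIcc_of_le zero_le_one
  refine intervalIntegral.integral_eq_sub_of_hasDeriv_right_of_le zero_le_one hf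
    (fun ξ hξ => ?_) (huIcc ▸ hf').intervalIntegrable
  exact (hd ξ (Ioo_subset_Icc_self hξ)).mono_of_mem_nhdsWithin
    (Icc_mem_nhdsGT_of_mem ⟨le_of_lt hξ.1, hξ.2⟩)


/-- A classical solution of the Neumann boundary-controlled semilinear heat
equation on `[0,1]` with nonlinearity `f(r) = −r − r³`, boundary input `u` and
initial datum `x₀`. Here `xt`, `xξ`, `xξξ` are the partial derivatives
`∂x/∂t`, `∂x/∂ξ`, `∂²x/∂ξ²`. -/
structure IsSemilinearNeumannHeatSolution (u : ℝ → ℝ) (x₀ : ℝ → ℝ)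
    (x xt xξ xξξ : ℝ → ℝ → ℝ) : Prop where
  xcont : ContinuousOn (fun p : ℝ × ℝ => x p.1 p.2) (Icc 0 1 ×ˢ Ici 0)
  xtcont : ContinuousOn (fun p : ℝ × ℝ => xt p.1 p.2) (Icc 0 1 ×ˢ Ioi 0)
  xξcont : ContinuousOn (fun p : ℝ × ℝ => xξ p.1 p.2) (Icc 0 1 ×ˢ Ioi 0)
  xξξcont : ContinuousOn (fun p : ℝ × ℝ => xξξ p.1 p.2) (Icc 0 1 ×ˢ Ioi 0)
  dt : ∀ ξ ∈ Icc (0:ℝ) 1, ∀ t ∈ Ioi (0:ℝ), HasDerivAt (fun τ => x ξ τ) (xt ξ t) t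
  dξ : ∀ ξ ∈ Icc (0:ℝ) 1, ∀ t ∈ Ioi (0:ℝ),
    HasDerivWithinAt (fun ζ => x ζ t) (xξ ξ t) (Icc 0 1) ξ
  dξξ : ∀ ξ ∈ Icc (0:ℝ) 1, ∀ t ∈ Ioi (0:ℝ),
    HasDerivWithinAt (fun ζ => xξ ζ t) (xξξ ξ t) (Icc 0 1) ξ
  pde : ∀ ξ ∈ Icc (0:ℝ) 1, ∀ t ∈ Ioi (0:ℝ),
    xt ξ t = xξξ ξ t - x ξ t - (x ξ t)^3
  bc0 : ∀ t ∈ Ioi (0:ℝ), xξ 0 t = u t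
  bc1 : ∀ t ∈ Ioi (0:ℝ), xξ 1 t = u t
  ic : ∀ ξ ∈ Icc (0:ℝ) 1, x ξ 0 = x₀ ξ

/-- there exist `ω > 0` and `C > 0` such that every classical
solution of the Neumann boundary-controlled semilinear heat equation with
nonlinearity `f(r) = −r − r³` satisfies, for all `t > 0`,
`∫₀¹ x(ξ,t)² dξ ≤ e^{−ωt}∫₀¹ x₀² + C ∫₀ᵗ e^{−ω(t−s)} u(s)² ds`. -/
theorem stmt_15 :
    ∃ ω > (0:ℝ), ∃ C > (0:ℝ), ∀ (u : ℝ → ℝ), Continuous u →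
      ∀ (x₀ : ℝ → ℝ), ContinuousOn x₀ (Icc 0 1) →
      ∀ (x xt xξ xξξ : ℝ → ℝ → ℝ),
        IsSemilinearNeumannHeatSolution u x₀ x xt xξ xξξ →
      ∀ t > (0:ℝ),
        (∫ ξ in (0:ℝ)..1, (x ξ t)^2)
          ≤ Real.exp (-ω * t) * (∫ ξ in (0:ℝ)..1, (x₀ ξ)^2)
            + C * ∫ s in (0:ℝ)..t, Real.exp (-ω * (t - s)) * (u s)^2 := by
  refine ⟨2, two_pos, 1, one_pos, ?_⟩
  intro u hu x₀ hx₀ x xt xξ xξξ h t ht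
  have huIcc : uIcc (0:ℝ) 1 = Icc 0 1 := uIcc_of_le zero_le_one
  have huIoc : Ι (0:ℝ) 1 = Ioc 0 1 := uIoc_of_le zero_le_one
  -- slices
  have hx_sl : ∀ τ ∈ Ici (0:ℝ), ContinuousOn (fun ξ => x ξ τ) (Icc 0 1) := fun τ hτ =>
    h.xcont.comp ((continuous_id.prodMk continuous_const).continuousOn)
      (fun ξ hξ => ⟨hξ, hτ⟩)
  have hxt_sl : ∀ τ ∈ Ioi (0:ℝ), ContinuousOn (fun ξ => xt ξ τ) (Icc 0 1) := fun τ hτ =>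
    h.xtcont.comp ((continuous_id.prodMk continuous_const).continuousOn)
      (fun ξ hξ => ⟨hξ, hτ⟩)
  have hxξ_sl : ∀ τ ∈ Ioi (0:ℝ), ContinuousOn (fun ξ => xξ ξ τ) (Icc 0 1) := fun τ hτ =>
    h.xξcont.comp ((continuous_id.prodMk continuous_const).continuousOn)
      (fun ξ hξ => ⟨hξ, hτ⟩)
  have hxξξ_sl : ∀ τ ∈ Ioi (0:ℝ), ContinuousOn (fun ξ => xξξ ξ τ) (Icc 0 1) := fun τ hτ =>
    h.xξξcont.comp ((continuous_id.prodMk continuous_const).continuousOn)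
      (fun ξ hξ => ⟨hξ, hτ⟩)
  set V : ℝ → ℝ := fun τ => ∫ ξ in (0:ℝ)..1, (x ξ τ)^2 with hV
  set D : ℝ → ℝ := fun τ => ∫ ξ in (0:ℝ)..1, 2 * x ξ τ * xt ξ τ with hD
  have iI : ∀ {g : ℝ → ℝ}, ContinuousOn g (Icc 0 1) → IntervalIntegrable g volume 0 1 :=
    fun hg => (huIcc ▸ hg).intervalIntegrable
  have aesm : ∀ {g : ℝ → ℝ}, ContinuousOn g (Icc 0 1) →
      AEStronglyMeasurable g (volume.restrict (Ι (0:ℝ) 1)) := fun hg =>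
    huIoc ▸ (hg.mono Ioc_subset_Icc_self).aestronglyMeasurable measurableSet_Ioc
  -- derivative of V
  have hVderiv : ∀ τ ∈ Ioi (0:ℝ), HasDerivAt V (D τ) τ := by
    intro τ₀ hτ₀
    have hτ₀' : (0:ℝ) < τ₀ := hτ₀
    set K : Set (ℝ × ℝ) := Icc 0 1 ×ˢ Icc (τ₀/2) (τ₀ + τ₀/2) with hK
    have hKsub : K ⊆ Icc 0 1 ×ˢ Ioi 0 := prod_mono_right (fun s hs => lt_of_lt_of_le
      (by linarith : (0:ℝ) < τ₀/2) hs.1)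
    have hKsub' : K ⊆ Icc 0 1 ×ˢ Ici 0 := hKsub.trans (prod_mono_right (fun s hs => mem_Ici.mpr (le_of_lt hs)))
    have hKc : IsCompact K := isCompact_Icc.prod isCompact_Icc
    have hgc : ContinuousOn (fun p : ℝ × ℝ => 2 * x p.1 p.2 * xt p.1 p.2) K :=
      ((continuousOn_const.mul (h.xcont.mono hKsub')).mul (h.xtcont.mono hKsub))
    obtain ⟨M, hM⟩ := hKc.exists_bound_of_continuousOn hgc
    have hball : Metric.ball τ₀ (τ₀/2) ⊆ Icc (τ₀/2) (τ₀ + τ₀/2) := by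
      intro s hs
      rw [Metric.mem_ball, Real.dist_eq] at hs
      have := abs_lt.mp hs
      constructor <;> linarith [this.1, this.2]
    have hballpos : Metric.ball τ₀ (τ₀/2) ⊆ Ioi (0:ℝ) := fun s hs =>
      lt_of_lt_of_le (by linarith) (hball hs).1
    have hmeas : ∀ᶠ τ in nhds τ₀, AEStronglyMeasurable (fun ξ => (x ξ τ)^2)
        (volume.restrict (Ι (0:ℝ) 1)) :=
      Filter.eventually_of_mem (Metric.ball_mem_nhds τ₀ (half_pos hτ₀')) (fun τ hτ =>
        aesm ((hx_sl τ (mem_Ici.mpr (le_of_lt (hballpos hτ)))).pow 2))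
    have hFint : IntervalIntegrable (fun ξ => (x ξ τ₀)^2) volume 0 1 :=
      iI ((hx_sl τ₀ (mem_Ici.mpr (le_of_lt hτ₀'))).pow 2)
    have hF'meas : AEStronglyMeasurable (fun ξ => 2 * x ξ τ₀ * xt ξ τ₀)
        (volume.restrict (Ι (0:ℝ) 1)) :=
      aesm ((continuousOn_const.mul (hx_sl τ₀ (mem_Ici.mpr (le_of_lt hτ₀')))).mul (hxt_sl τ₀ hτ₀))
    have hbound : ∀ᵐ ξ ∂(volume : Measure ℝ), ξ ∈ Ι (0:ℝ) 1 →
        ∀ τ ∈ Metric.ball τ₀ (τ₀/2), ‖2 * x ξ τ * xt ξ τ‖ ≤ M :=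
      Filter.Eventually.of_forall (fun ξ hξ τ hτ =>
        hM (ξ, τ) ⟨Ioc_subset_Icc_self (huIoc ▸ hξ), hball hτ⟩)
    have hdiff : ∀ᵐ ξ ∂(volume : Measure ℝ), ξ ∈ Ι (0:ℝ) 1 →
        ∀ τ ∈ Metric.ball τ₀ (τ₀/2),
          HasDerivAt (fun τ => (x ξ τ)^2) (2 * x ξ τ * xt ξ τ) τ :=
      Filter.Eventually.of_forall (fun ξ hξ τ hτ => by
        simpa using (h.dt ξ (Ioc_subset_Icc_self (huIoc ▸ hξ)) τ (hballpos hτ)).fun_pow 2)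
    exact (intervalIntegral.hasDerivAt_integral_of_dominated_loc_of_deriv_le
      (F := fun τ ξ => (x ξ τ)^2) (F' := fun τ ξ => 2 * x ξ τ * xt ξ τ)
      (bound := fun _ => M) (Metric.ball_mem_nhds τ₀ (half_pos hτ₀')) hmeas hFint hF'meas hbound
      intervalIntegrable_const hdiff).2
  -- energy inequality
  have hkey : ∀ τ ∈ Ioi (0:ℝ), D τ ≤ -2 * V τ + (u τ)^2 := by
    intro τ hτ
    have hτ' : (0:ℝ) < τ := hτ
    have hxc := hx_sl τ (mem_Ici.mpr (le_of_lt hτ'))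
    have hxξc := hxξ_sl τ hτ
    have hxξξc := hxξξ_sl τ hτ
    have hftc1 : ∫ ξ in (0:ℝ)..1, xξ ξ τ = x 1 τ - x 0 τ :=
      my_ftc _ _ hxc (fun ξ hξ => h.dξ ξ hξ τ hτ) hxξc
    have hibp : ∫ ξ in (0:ℝ)..1, ((xξ ξ τ)^2 + x ξ τ * xξξ ξ τ)
        = x 1 τ * u τ - x 0 τ * u τ := by
      have hres := my_ftc (fun ξ => x ξ τ * xξ ξ τ)
        (fun ξ => (xξ ξ τ)^2 + x ξ τ * xξξ ξ τ) (hxc.mul hxξc)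
        (fun ξ hξ => by
          have hmul := (h.dξ ξ hξ τ hτ).mul (h.dξξ ξ hξ τ hτ)
          exact hmul.congr_deriv (by ring))
        ((hxξc.pow 2).add (hxc.mul hxξξc))
      rw [hres]
      simp only [h.bc0 τ hτ, h.bc1 τ hτ]
    have iA : IntervalIntegrable (fun ξ => (xξ ξ τ)^2) volume 0 1 := iI (hxξc.pow 2)
    have iB : IntervalIntegrable (fun ξ => x ξ τ * xξξ ξ τ) volume 0 1 := iI (hxc.mul hxξξc)
    have iC : IntervalIntegrable (fun ξ => (x ξ τ)^2) volume 0 1 := iI (hxc.pow 2)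
    have iE : IntervalIntegrable (fun ξ => (x ξ τ)^4) volume 0 1 := iI (hxc.pow 4)
    have hDeq : D τ = 2 * (∫ ξ in (0:ℝ)..1, x ξ τ * xξξ ξ τ)
        - 2 * V τ - 2 * (∫ ξ in (0:ℝ)..1, (x ξ τ)^4) := by
      have hcongr : D τ = ∫ ξ in (0:ℝ)..1,
          (2 * (x ξ τ * xξξ ξ τ) - 2 * (x ξ τ)^2 - 2 * (x ξ τ)^4) := by
        refine intervalIntegral.integral_congr (fun ξ hξ => ?_)
        have hp := h.pde ξ (huIcc ▸ hξ) τ hτ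
        show 2 * x ξ τ * xt ξ τ = _
        rw [hp]; ring
      rw [hcongr,
        intervalIntegral.integral_sub ((iB.const_mul 2).sub (iC.const_mul 2)) (iE.const_mul 2),
        intervalIntegral.integral_sub (iB.const_mul 2) (iC.const_mul 2),
        intervalIntegral.integral_const_mul, intervalIntegral.integral_const_mul,
        intervalIntegral.integral_const_mul]
    have hsplit := intervalIntegral.integral_add iA iB
    rw [hibp] at hsplit
    have hA0 : 0 ≤ ∫ ξ in (0:ℝ)..1, (xξ ξ τ)^2 :=
      intervalIntegral.integral_nonneg zero_le_one (fun _ _ => sq_nonneg _)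
    have hE0 : 0 ≤ ∫ ξ in (0:ℝ)..1, (x ξ τ)^4 :=
      intervalIntegral.integral_nonneg zero_le_one (fun ξ _ => by positivity)
    have hCS : (x 1 τ - x 0 τ)^2 ≤ ∫ ξ in (0:ℝ)..1, (xξ ξ τ)^2 := by
      rw [← hftc1]; exact my_sq_integral_le _ hxξc
    have h2 : 2 * ((x 1 τ - x 0 τ) * u τ) ≤ (x 1 τ - x 0 τ)^2 + (u τ)^2 := by
      nlinarith [sq_nonneg (x 1 τ - x 0 τ - u τ)]
    rw [hDeq]
    nlinarith [hsplit, hA0, hE0, hCS, h2]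
  -- continuity of V at 0 from the right
  have hVcont0 : ContinuousWithinAt V (Ici 0) 0 := by
    rw [Metric.continuousWithinAt_iff]
    intro ε hε
    have hKc : IsCompact (Icc (0:ℝ) 1 ×ˢ Icc (0:ℝ) 1) := isCompact_Icc.prod isCompact_Icc
    have hcont : ContinuousOn (fun p : ℝ × ℝ => (x p.1 p.2)^2) (Icc 0 1 ×ˢ Icc 0 1) :=
      (h.xcont.mono (prod_mono_right Icc_subset_Ici_self)).pow 2
    have huc := hKc.uniformContinuousOn_of_continuous hcont
    rw [Metric.uniformContinuousOn_iff] at huc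
    obtain ⟨δ, hδ, hδ'⟩ := huc (ε/2) (half_pos hε)
    refine ⟨min δ 1, lt_min hδ one_pos, fun τ hτ hdist => ?_⟩
    rw [Real.dist_eq, sub_zero] at hdist
    have hτabs := abs_lt.mp hdist
    have hτδ : τ < δ := lt_of_lt_of_le hτabs.2 (min_le_left δ 1)
    have hτIcc : τ ∈ Icc (0:ℝ) 1 :=
      ⟨hτ, le_of_lt (lt_of_lt_of_le hτabs.2 (min_le_right δ 1))⟩
    have hbd : ∀ ξ ∈ Ι (0:ℝ) 1, ‖(x ξ τ)^2 - (x ξ 0)^2‖ ≤ ε/2 := by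
      intro ξ hξ
      have hξ' : ξ ∈ Icc (0:ℝ) 1 := Ioc_subset_Icc_self (huIoc ▸ hξ)
      have hd : dist ((ξ, τ) : ℝ × ℝ) (ξ, 0) < δ := by
        simp only [Prod.dist_eq, dist_self, Real.dist_eq, sub_zero]
        rw [max_lt_iff]
        exact ⟨hδ, lt_of_lt_of_le hdist (min_le_left δ 1)⟩
      have hlt := hδ' (ξ, τ) ⟨hξ', hτIcc⟩ (ξ, 0) ⟨hξ', left_mem_Icc.mpr zero_le_one⟩ hd
      rw [Real.dist_eq] at hlt
      rw [Real.norm_eq_abs]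
      exact le_of_lt hlt
    have hsub : V τ - V 0 = ∫ ξ in (0:ℝ)..1, ((x ξ τ)^2 - (x ξ 0)^2) :=
      (intervalIntegral.integral_sub (iI ((hx_sl τ hτ).pow 2))
        (iI ((hx_sl 0 (self_mem_Ici)).pow 2))).symm
    rw [Real.dist_eq, hsub]
    calc |∫ ξ in (0:ℝ)..1, ((x ξ τ)^2 - (x ξ 0)^2)| ≤ (ε/2) * |1 - 0| :=
        intervalIntegral.norm_integral_le_of_norm_le_const hbd
      _ < ε := by rw [sub_zero, abs_one, mul_one]; linarith
  -- Gronwall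
  set W : ℝ → ℝ := fun τ => Real.exp (2*τ) * V τ
      - ∫ s in (0:ℝ)..τ, Real.exp (2*s) * (u s)^2 with hWdef
  have hgcont : Continuous (fun s : ℝ => Real.exp (2*s) * (u s)^2) :=
    (Real.continuous_exp.comp (continuous_const.mul continuous_id)).mul (hu.pow 2)
  have hPder : ∀ τ : ℝ, HasDerivAt (fun τ => ∫ s in (0:ℝ)..τ, Real.exp (2*s) * (u s)^2)
      (Real.exp (2*τ) * (u τ)^2) τ := fun τ => (hgcont.integral_hasStrictDerivAt 0 τ).hasDerivAt
  have hWder : ∀ τ ∈ Ioo (0:ℝ) t, HasDerivAt W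
      (Real.exp (2*τ) * (2 * V τ + D τ) - Real.exp (2*τ) * (u τ)^2) τ := by
    intro τ hτ
    have h1 : HasDerivAt (fun τ : ℝ => Real.exp (2*τ)) (Real.exp (2*τ) * 2) τ := by
      simpa using ((hasDerivAt_id τ).const_mul (2:ℝ)).exp
    have h2 : HasDerivAt (fun τ => Real.exp (2*τ) * V τ)
        (Real.exp (2*τ) * 2 * V τ + Real.exp (2*τ) * D τ) τ := h1.mul (hVderiv τ hτ.1)
    have h3 := h2.sub (hPder τ)
    exact h3.congr_deriv (by ring)
  have hWcont : ContinuousOn W (Icc 0 t) := by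
    have hVc : ContinuousOn V (Icc 0 t) := by
      intro τ hτ
      rcases eq_or_lt_of_le hτ.1 with heq | hlt
      · exact heq ▸ (hVcont0.mono (fun s hs => hs.1))
      · exact (hVderiv τ hlt).continuousAt.continuousWithinAt
    exact ((Real.continuous_exp.comp (continuous_const.mul continuous_id)).continuousOn.mul
      hVc).sub (continuous_iff_continuousAt.mpr
        (fun τ => (hPder τ).continuousAt)).continuousOn
  have hWanti : AntitoneOn W (Icc 0 t) := by
    refine antitoneOn_of_deriv_nonpos (convex_Icc 0 t) hWcont ?_ ?_
    · rw [interior_Icc]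
      exact fun τ hτ => (hWder τ hτ).differentiableAt.differentiableWithinAt
    · rw [interior_Icc]
      intro τ hτ
      rw [(hWder τ hτ).deriv]
      have hk := hkey τ hτ.1
      have he := Real.exp_pos (2*τ)
      have heq : Real.exp (2*τ) * (2 * V τ + D τ) - Real.exp (2*τ) * (u τ)^2
          = Real.exp (2*τ) * ((2 * V τ + D τ) - (u τ)^2) := by ring
      rw [heq]
      exact mul_nonpos_of_nonneg_of_nonpos he.le (by linarith)
  have hWt : W t ≤ W 0 := hWanti ⟨le_rfl, le_of_lt ht⟩ ⟨le_of_lt ht, le_rfl⟩ (le_of_lt ht)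
  have hV0 : V 0 = ∫ ξ in (0:ℝ)..1, (x₀ ξ)^2 :=
    intervalIntegral.integral_congr (fun ξ hξ => by
      show (x ξ 0)^2 = (x₀ ξ)^2
      rw [h.ic ξ (huIcc ▸ hξ)])
  have hW0 : W 0 = ∫ ξ in (0:ℝ)..1, (x₀ ξ)^2 := by
    simp [hWdef, hV0]
  have hWt' : Real.exp (2*t) * V t - (∫ s in (0:ℝ)..t, Real.exp (2*s) * (u s)^2)
      ≤ ∫ ξ in (0:ℝ)..1, (x₀ ξ)^2 := by
    rw [← hW0]
    exact hWt
  have hconv : (∫ s in (0:ℝ)..t, Real.exp (-2 * (t - s)) * (u s)^2)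
      = Real.exp (-2*t) * ∫ s in (0:ℝ)..t, Real.exp (2*s) * (u s)^2 := by
    rw [← intervalIntegral.integral_const_mul]
    refine intervalIntegral.integral_congr (fun s hs => ?_)
    show Real.exp (-2 * (t - s)) * (u s)^2 = Real.exp (-2*t) * (Real.exp (2*s) * (u s)^2)
    rw [← mul_assoc, ← Real.exp_add]
    ring_nf
  have hexp1 : Real.exp (-2*t) * Real.exp (2*t) = 1 := by
    rw [← Real.exp_add]
    norm_num
  have hEpos := Real.exp_pos (-2*t)
  calc V t = Real.exp (-2*t) * (Real.exp (2*t) * V t) := by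
        rw [← mul_assoc, hexp1, one_mul]
    _ ≤ Real.exp (-2*t) * ((∫ ξ in (0:ℝ)..1, (x₀ ξ)^2)
          + ∫ s in (0:ℝ)..t, Real.exp (2*s) * (u s)^2) := by
        apply mul_le_mul_of_nonneg_left _ (le_of_lt hEpos)
        linarith
    _ = Real.exp (-2*t) * (∫ ξ in (0:ℝ)..1, (x₀ ξ)^2)
          + 1 * ∫ s in (0:ℝ)..t, Real.exp (-2*(t-s)) * (u s)^2 := by
        rw [hconv]; ring
end

section
/- For every q ∈ [2,∞] there exist constants ω > 0 and C > 0 such that for every continuous input u : [0,∞) → ℝ, every initial datum x₀ ∈ C([0,1]) and every classical solution x of the Neumann boundary-controlled semilinear heat equation on [0,1] with nonlinearity f(r) = −r − r³, boundary input u and initial datum x₀, one has for all t > 0: (∫₀¹ x(ξ,t)² dξ)^{1/2} ≤ e^{−ωt} (∫₀¹ x₀(ξ)² dξ)^{1/2} + C ‖u‖_{L^q(0,t)}. That is, the semilinear boundary control system is L^q-input-to-state stable for every q ∈ [2,∞]. -/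
open MeasureTheory Set ENNReal

section AuxISS

variable {u x₀ : ℝ → ℝ} {x xt xξ xξξ : ℝ → ℝ → ℝ}

lemma slice_of_joint_ISS {f : ℝ → ℝ → ℝ} {s : Set ℝ}
    (hc : ContinuousOn (fun p : ℝ × ℝ => f p.1 p.2) (Icc 0 1 ×ˢ s))
    {t : ℝ} (ht : t ∈ s) : ContinuousOn (fun ζ => f ζ t) (Icc 0 1) :=
  hc.comp ((continuous_id.prodMk continuous_const).continuousOn)
    (fun _ hξ => ⟨hξ, ht⟩)

lemma cOn_intInt_ISS {f : ℝ → ℝ} (h : ContinuousOn f (Icc 0 1)) :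
    IntervalIntegrable f volume 0 1 := by
  apply ContinuousOn.intervalIntegrable
  rwa [uIcc_of_le (by norm_num : (0:ℝ) ≤ 1)]

lemma ftc01_ISS {f f' : ℝ → ℝ} (hc : ContinuousOn f (Icc 0 1))
    (hd : ∀ ξ ∈ Icc (0:ℝ) 1, HasDerivWithinAt f (f' ξ) (Icc 0 1) ξ)
    (hi : IntervalIntegrable f' volume 0 1) :
    ∫ ξ in (0:ℝ)..1, f' ξ = f 1 - f 0 := by
  apply intervalIntegral.integral_eq_sub_of_hasDeriv_right_of_le (by norm_num) hc _ hi
  intro ξ hξ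
  exact ((hd ξ (Ioo_subset_Icc_self hξ)).hasDerivAt
    (Icc_mem_nhds hξ.1 hξ.2)).hasDerivWithinAt

lemma sqrt_add_le_ISS {a b : ℝ} (ha : 0 ≤ a) (hb : 0 ≤ b) :
    Real.sqrt (a+b) ≤ Real.sqrt a + Real.sqrt b := by
  have h := Real.sqrt_le_sqrt (show a + b ≤ (Real.sqrt a + Real.sqrt b)^2 by
    have h1 := Real.sq_sqrt ha
    have h2 := Real.sq_sqrt hb
    nlinarith [Real.sqrt_nonneg a, Real.sqrt_nonneg b])
  rwa [Real.sqrt_sq (by positivity)] at h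

lemma hasDerivV (S : IsSemilinearNeumannHeatSolution u x₀ x xt xξ xξξ) {t : ℝ} (ht : 0 < t) :
    HasDerivAt (fun τ => ∫ ξ in (0:ℝ)..1, (x ξ τ)^2)
      (∫ ξ in (0:ℝ)..1, 2 * x ξ t * xt ξ t) t := by
  -- compact set for bounds
  have hK : IsCompact (Icc (0:ℝ) 1 ×ˢ Icc (t/2) (t+t)) :=
    (isCompact_Icc).prod isCompact_Icc
  have hKsub : Icc (0:ℝ) 1 ×ˢ Icc (t/2) (t+t) ⊆ Icc 0 1 ×ˢ Ioi 0 := by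
    intro p hp
    exact ⟨hp.1, lt_of_lt_of_le (by linarith) hp.2.1⟩
  have hKsub' : Icc (0:ℝ) 1 ×ˢ Icc (t/2) (t+t) ⊆ Icc 0 1 ×ˢ Ici 0 := by
    intro p hp
    exact ⟨hp.1, le_of_lt (lt_of_lt_of_le (by linarith) hp.2.1)⟩
  obtain ⟨M, hM⟩ := hK.exists_bound_of_continuousOn
    ((S.xcont.mono hKsub').mul (S.xtcont.mono hKsub))
  have hball : Metric.ball t (t/2) ⊆ Icc (t/2) (t+t) := by
    intro τ hτ
    rw [Metric.mem_ball, Real.dist_eq, abs_lt] at hτ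
    constructor <;> linarith [hτ.1, hτ.2]
  have hmeas : MeasurableSet (Set.uIoc (0:ℝ) 1) := measurableSet_uIoc
  have hsub : Set.uIoc (0:ℝ) 1 ⊆ Icc 0 1 := by
    rw [uIoc_of_le (by norm_num : (0:ℝ) ≤ 1)]; exact Ioc_subset_Icc_self
  have key := intervalIntegral.hasDerivAt_integral_of_dominated_loc_of_deriv_le
    (F := fun τ ξ => (x ξ τ)^2) (F' := fun τ ξ => 2 * x ξ τ * xt ξ τ)
    (a := 0) (b := 1) (x₀ := t) (μ := volume) (bound := fun _ => 2 * M)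
    (Metric.ball_mem_nhds t (half_pos ht))
    ?_ ?_ ?_ ?_ ?_ ?_
  · exact key.2
  · -- measurability of F τ
    filter_upwards [eventually_gt_nhds ht] with τ hτ
    exact (((slice_of_joint_ISS S.xcont (le_of_lt hτ)).pow 2).mono hsub).aestronglyMeasurable
      hmeas
  · -- integrability of F t
    apply ContinuousOn.intervalIntegrable
    rw [uIcc_of_le (by norm_num : (0:ℝ) ≤ 1)]
    exact (slice_of_joint_ISS S.xcont (le_of_lt ht)).pow 2
  · -- measurability of F' t
    refine ContinuousOn.aestronglyMeasurable (ContinuousOn.mono ?_ hsub) hmeas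
    exact ((continuousOn_const.mul (slice_of_joint_ISS S.xcont (le_of_lt ht))).mul
      (slice_of_joint_ISS S.xtcont ht))
  · -- bound
    refine Filter.Eventually.of_forall (fun ξ hξ τ hτ => ?_)
    have hp : (ξ, τ) ∈ Icc (0:ℝ) 1 ×ˢ Icc (t/2) (t+t) := ⟨hsub hξ, hball hτ⟩
    have := hM (ξ, τ) hp
    simp only [Real.norm_eq_abs, Pi.mul_apply] at this ⊢
    calc |2 * x ξ τ * xt ξ τ| = 2 * |x ξ τ * xt ξ τ| := by
          rw [mul_assoc, abs_mul]; norm_num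
      _ ≤ 2 * M := by nlinarith [abs_nonneg (x ξ τ * xt ξ τ)]
  · exact intervalIntegrable_const
  · -- differentiability
    refine Filter.Eventually.of_forall (fun ξ hξ τ hτ => ?_)
    have hτ0 : 0 < τ := lt_of_lt_of_le (by linarith) (hball hτ).1
    have := (S.dt ξ (hsub hξ) τ hτ0).fun_pow 2
    exact this.congr_deriv (by norm_num)

lemma energy_ineq (S : IsSemilinearNeumannHeatSolution u x₀ x xt xξ xξξ) {t : ℝ} (ht : 0 < t) :
    (∫ ξ in (0:ℝ)..1, 2 * x ξ t * xt ξ t)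
      ≤ (u t)^2 - 2 * ∫ ξ in (0:ℝ)..1, (x ξ t)^2 := by
  have htI : t ∈ Ioi (0:ℝ) := ht
  have hcx : ContinuousOn (fun ζ => x ζ t) (Icc 0 1) :=
    slice_of_joint_ISS S.xcont (le_of_lt ht)
  have hcxξ : ContinuousOn (fun ζ => xξ ζ t) (Icc 0 1) :=
    slice_of_joint_ISS S.xξcont htI
  have hcxξξ : ContinuousOn (fun ζ => xξξ ζ t) (Icc 0 1) :=
    slice_of_joint_ISS S.xξξcont htI
  set A := ∫ ξ in (0:ℝ)..1, xξ ξ t with hA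
  set B := ∫ ξ in (0:ℝ)..1, (xξ ξ t)^2 with hB
  set V := ∫ ξ in (0:ℝ)..1, (x ξ t)^2 with hV
  set Q := ∫ ξ in (0:ℝ)..1, (x ξ t)^4 with hQ
  have hixξ := cOn_intInt_ISS hcxξ
  have hixξ2 := cOn_intInt_ISS (hcxξ.pow 2)
  have hix2 := cOn_intInt_ISS (hcx.pow 2)
  have hix4 := cOn_intInt_ISS (hcx.pow 4)
  have hixxξξ := cOn_intInt_ISS (hcx.mul hcxξξ)
  -- A = x 1 t - x 0 t
  have hA' : A = x 1 t - x 0 t :=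
    ftc01_ISS hcx (fun ξ hξ => S.dξ ξ hξ t htI) hixξ
  -- integration by parts : ∫ (xξ^2 + x xξξ) = x1 xξ1 - x0 xξ0 = u t * (x1 - x0)
  have hibp : B + ∫ ξ in (0:ℝ)..1, x ξ t * xξξ ξ t = u t * (x 1 t - x 0 t) := by
    have h1 : ∫ ξ in (0:ℝ)..1, (xξ ξ t * xξ ξ t + x ξ t * xξξ ξ t)
        = x 1 t * xξ 1 t - x 0 t * xξ 0 t := by
      apply ftc01_ISS (hcx.mul hcxξ)
      · intro ξ hξ
        exact (S.dξ ξ hξ t htI).mul (S.dξξ ξ hξ t htI)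
      · apply cOn_intInt_ISS
        exact (hcxξ.mul hcxξ).add (hcx.mul hcxξξ)
    rw [intervalIntegral.integral_add (f := fun ξ => xξ ξ t * xξ ξ t) (g := fun ξ => x ξ t * xξξ ξ t) (cOn_intInt_ISS (hcxξ.mul hcxξ)) hixxξξ] at h1
    rw [S.bc0 t htI, S.bc1 t htI] at h1
    have : ∫ ξ in (0:ℝ)..1, xξ ξ t * xξ ξ t = B := by
      rw [hB]; apply intervalIntegral.integral_congr; intro ξ _; ring
    rw [this] at h1
    rw [h1]; ring
  -- Cauchy-Schwarz : A^2 ≤ B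
  have hCS : A^2 ≤ B := by
    have h0 : 0 ≤ ∫ ξ in (0:ℝ)..1, (xξ ξ t - A)^2 := by
      apply intervalIntegral.integral_nonneg (by norm_num)
      intro ξ _; positivity
    have hexp : ∫ ξ in (0:ℝ)..1, (xξ ξ t - A)^2 = B - 2*A*A + A^2 := by
      have : ∀ ξ ∈ uIcc (0:ℝ) 1, (xξ ξ t - A)^2
          = (xξ ξ t)^2 - (2*A) * xξ ξ t + A^2 := by intro ξ _; ring
      rw [intervalIntegral.integral_congr this,
        intervalIntegral.integral_add (f := fun ξ => (xξ ξ t)^2 - (2*A) * xξ ξ t) (g := fun _ => A^2) (IntervalIntegrable.sub hixξ2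
          (hixξ.const_mul (2*A))) intervalIntegrable_const,
        intervalIntegral.integral_sub (f := fun ξ => (xξ ξ t)^2) (g := fun ξ => (2*A) * xξ ξ t) hixξ2 (hixξ.const_mul (2*A)),
        intervalIntegral.integral_const_mul, intervalIntegral.integral_const]
      simp [hA, hB]
    try ring_nf
    nlinarith
  -- rewrite integrand via PDE
  have hmain : (∫ ξ in (0:ℝ)..1, 2 * x ξ t * xt ξ t)
      = 2 * (∫ ξ in (0:ℝ)..1, x ξ t * xξξ ξ t) - 2 * V - 2 * Q := by
    have hcong : ∀ ξ ∈ uIcc (0:ℝ) 1, 2 * x ξ t * xt ξ t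
        = 2 * (x ξ t * xξξ ξ t) - 2 * (x ξ t)^2 - 2 * (x ξ t)^4 := by
      intro ξ hξ
      rw [uIcc_of_le (by norm_num : (0:ℝ) ≤ 1)] at hξ
      rw [S.pde ξ hξ t htI]; ring
    rw [intervalIntegral.integral_congr hcong,
      intervalIntegral.integral_sub (f := fun ξ => 2 * (x ξ t * xξξ ξ t) - 2 * (x ξ t)^2) (g := fun ξ => 2 * (x ξ t)^4) (IntervalIntegrable.sub
        (hixxξξ.const_mul 2) (hix2.const_mul 2)) (hix4.const_mul 2),
      intervalIntegral.integral_sub (f := fun ξ => 2 * (x ξ t * xξξ ξ t)) (g := fun ξ => 2 * (x ξ t)^2) (hixxξξ.const_mul 2) (hix2.const_mul 2),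
      intervalIntegral.integral_const_mul, intervalIntegral.integral_const_mul,
      intervalIntegral.integral_const_mul]
  have hQ0 : 0 ≤ Q := by
    apply intervalIntegral.integral_nonneg (by norm_num)
    intro ξ _; positivity
  have hB0 : 0 ≤ B := by
    apply intervalIntegral.integral_nonneg (by norm_num)
    intro ξ _; positivity
  -- combine
  have hx1 : ∫ ξ in (0:ℝ)..1, x ξ t * xξξ ξ t = u t * A - B := by
    rw [hA']; linarith [hibp]
  rw [hmain, hx1]
  have h2 : 2 * (u t * A) ≤ (u t)^2 + A^2 := by nlinarith [sq_nonneg (u t - A)]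
  nlinarith

lemma contV (hc : ContinuousOn (fun p : ℝ × ℝ => x p.1 p.2) (Icc 0 1 ×ˢ Ici 0))
    {t : ℝ} (ht : 0 < t) :
    ContinuousOn (fun τ => ∫ ξ in (0:ℝ)..1, (x ξ τ)^2) (Icc 0 t) := by
  have hK : IsCompact (Icc (0:ℝ) 1 ×ˢ Icc (0:ℝ) t) := isCompact_Icc.prod isCompact_Icc
  have hKsub : Icc (0:ℝ) 1 ×ˢ Icc (0:ℝ) t ⊆ Icc 0 1 ×ˢ Ici 0 :=
    fun p hp => ⟨hp.1, hp.2.1⟩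
  obtain ⟨M, hM⟩ := hK.exists_bound_of_continuousOn ((hc.mono hKsub).mul (hc.mono hKsub))
  have hmeas : MeasurableSet (Set.uIoc (0:ℝ) 1) := measurableSet_uIoc
  have hsub : Set.uIoc (0:ℝ) 1 ⊆ Icc 0 1 := by
    rw [uIoc_of_le (by norm_num : (0:ℝ) ≤ 1)]; exact Ioc_subset_Icc_self
  intro τ₀ hτ₀
  apply intervalIntegral.continuousWithinAt_of_dominated_interval
    (bound := fun _ => M)
  · filter_upwards [self_mem_nhdsWithin] with τ hτ
    have hslice : ContinuousOn (fun ξ => x ξ τ) (Icc 0 1) :=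
      hc.comp ((continuous_id.prodMk continuous_const).continuousOn)
        (fun ξ hξ => ⟨hξ, hτ.1⟩)
    exact ((hslice.pow 2).mono hsub).aestronglyMeasurable hmeas
  · filter_upwards [self_mem_nhdsWithin] with τ hτ
    apply Filter.Eventually.of_forall
    intro ξ hξ
    have := hM (ξ, τ) ⟨hsub hξ, hτ⟩
    simpa [Real.norm_eq_abs, abs_mul, sq, abs_mul] using this
  · exact intervalIntegrable_const
  · apply Filter.Eventually.of_forall
    intro ξ hξ
    have hξ' : ξ ∈ Icc (0:ℝ) 1 := hsub hξ
    have : ContinuousWithinAt (fun τ => x ξ τ) (Icc 0 t) τ₀ := by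
      have hmc : ContinuousWithinAt (fun τ : ℝ => ((ξ, τ) : ℝ × ℝ)) (Icc 0 t) τ₀ :=
        (continuous_const.prodMk continuous_id).continuousWithinAt
      exact (hc ((ξ, τ₀)) ⟨hξ', hτ₀.1⟩).comp hmc (fun τ hτ => ⟨hξ', hτ.1⟩)
    exact this.pow 2

lemma gronwall {V D g : ℝ → ℝ} {t : ℝ} (ht : 0 < t)
    (hVc : ContinuousOn V (Icc 0 t))
    (hVd : ∀ τ ∈ Ioo 0 t, HasDerivAt V (D τ) τ)
    (hD : ∀ τ ∈ Ioo 0 t, D τ ≤ g τ - 2 * V τ)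
    (hg : Continuous g) :
    Real.exp (2*t) * V t ≤ V 0 + ∫ s in (0:ℝ)..t, Real.exp (2*s) * g s := by
  set G : ℝ → ℝ := fun τ => ∫ s in (0:ℝ)..τ, Real.exp (2*s) * g s with hG
  set W : ℝ → ℝ := fun τ => Real.exp (2*τ) * V τ - G τ with hW
  have hgc : Continuous (fun s => Real.exp (2*s) * g s) :=
    (Real.continuous_exp.comp (continuous_const.mul continuous_id)).mul hg
  have hGc : Continuous G := by
    apply intervalIntegral.continuous_primitive
    intro a b
    exact hgc.intervalIntegrable a b
  have hWc : ContinuousOn W (Icc 0 t) := by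
    apply ContinuousOn.sub
    · exact ((Real.continuous_exp.comp (continuous_const.mul continuous_id)).continuousOn).mul hVc
    · exact hGc.continuousOn
  have hWd : ∀ τ ∈ Ioo (0:ℝ) t, HasDerivAt W
      (Real.exp (2*τ) * 2 * V τ + Real.exp (2*τ) * D τ - Real.exp (2*τ) * g τ) τ := by
    intro τ hτ
    have h1 : HasDerivAt (fun τ : ℝ => Real.exp (2*τ)) (Real.exp (2*τ) * 2) τ := by
      have := ((hasDerivAt_id τ).const_mul (2:ℝ)).exp
      simpa [mul_comm] using this
    have h2 := h1.mul (hVd τ hτ)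
    have h3 : HasDerivAt G (Real.exp (2*τ) * g τ) τ :=
      intervalIntegral.integral_hasDerivAt_right (hgc.intervalIntegrable 0 τ)
        (hgc.stronglyMeasurableAtFilter _ _) hgc.continuousAt
    exact h2.sub h3
  have hanti : AntitoneOn W (Icc 0 t) := by
    apply antitoneOn_of_deriv_nonpos (convex_Icc 0 t) hWc
    · intro τ hτ
      rw [interior_Icc] at hτ
      exact ((hWd τ hτ).differentiableAt).differentiableWithinAt
    · intro τ hτ
      rw [interior_Icc] at hτ
      rw [(hWd τ hτ).deriv]
      have := hD τ hτ
      have he : (0:ℝ) < Real.exp (2*τ) := Real.exp_pos _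
      nlinarith
  have h0t := hanti (left_mem_Icc.mpr (le_of_lt ht)) (right_mem_Icc.mpr (le_of_lt ht)) (le_of_lt ht)
  have hW0 : W 0 = V 0 := by
    simp [hW, hG]
  rw [hW0] at h0t
  have : W t = Real.exp (2*t) * V t - G t := rfl
  linarith [h0t, this ▸ h0t]

lemma holder_step {u : ℝ → ℝ} (hu : Continuous u) {q : ℝ≥0∞} (hq : 2 ≤ q)
    {t : ℝ} (ht : 0 < t) :
    (∫ s in (0:ℝ)..t, Real.exp (2*(s-t)) * (u s)^2)
      ≤ ((eLpNorm u q (volume.restrict (Ioc 0 t))).toReal)^2 := by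
  set μt := volume.restrict (Ioc (0:ℝ) t) with hμt
  set e2 : ℝ → ℝ := fun s => Real.exp (2*(s-t)) with he2
  have he2c : Continuous e2 :=
    Real.continuous_exp.comp (continuous_const.mul (continuous_id.sub continuous_const))
  have he2nn : ∀ s, 0 ≤ e2 s := fun s => (Real.exp_pos _).le
  set w : ℝ → ℝ≥0∞ := fun s => ENNReal.ofReal (e2 s) with hw
  have hwm : Measurable w := (ENNReal.continuous_ofReal.comp he2c).measurable
  set ν := μt.withDensity w with hν
  set f : ℝ → ℝ := fun s => e2 s * (u s)^2 with hf
  have hfc : Continuous f := he2c.mul ((hu.pow 2))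
  have hfi : Integrable f μt := hfc.integrableOn_Ioc
  have h0 : (∫ s in (0:ℝ)..t, f s) = ∫ s, f s ∂μt := by
    rw [intervalIntegral.integral_of_le ht.le]
  have ha : ENNReal.ofReal (∫ s, f s ∂μt) = ∫⁻ s, ENNReal.ofReal (f s) ∂μt :=
    ofReal_integral_eq_lintegral_ofReal hfi
      (Filter.Eventually.of_forall (fun s => by positivity))
  have hgm : Measurable (fun s => ENNReal.ofReal ((u s)^2)) :=
    (ENNReal.continuous_ofReal.comp (hu.pow 2)).measurable
  have hb : (∫⁻ s, ENNReal.ofReal ((u s)^2) ∂ν) = ∫⁻ s, ENNReal.ofReal (f s) ∂μt := by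
    rw [hν, lintegral_withDensity_eq_lintegral_mul μt hwm hgm]
    congr 1
    funext s
    simp only [Pi.mul_apply, hw, hf]
    rw [← ENNReal.ofReal_mul (he2nn s)]
  have hc : ∀ s, ENNReal.ofReal ((u s)^2) = (‖u s‖₊ : ℝ≥0∞)^(2:ℕ) := by
    intro s
    rw [← enorm_eq_nnnorm, Real.enorm_eq_ofReal_abs, ← ENNReal.ofReal_pow (abs_nonneg _), sq_abs]
  have hd : (∫⁻ s, ENNReal.ofReal ((u s)^2) ∂ν) = (eLpNorm u 2 ν)^(2:ℕ) := by
    rw [eLpNorm_eq_lintegral_rpow_enorm_toReal (by norm_num) (by norm_num)]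
    simp only [enorm_eq_nnnorm]
    have h2 : ((2:ℝ≥0∞)).toReal = (2:ℝ) := by norm_num
    rw [h2]
    have hL : (∫⁻ s, ENNReal.ofReal ((u s)^2) ∂ν)
        = ∫⁻ s, (‖u s‖₊ : ℝ≥0∞)^(2:ℝ) ∂ν := by
      congr 1
      funext s
      rw [hc s, ← ENNReal.rpow_natCast]
      norm_num
    rw [hL, ← ENNReal.rpow_natCast _ 2, ← ENNReal.rpow_mul]
    norm_num
  -- exact value of ∫ e2 over (0,t)
  have key : ∫ s in (0:ℝ)..t, e2 s = Real.exp (2*(t-t))/2 - Real.exp (2*(0-t))/2 := by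
    have hder : ∀ s ∈ uIcc (0:ℝ) t, HasDerivAt (fun s => Real.exp (2*(s-t))/2) (e2 s) s := by
      intro s _
      have h1 : HasDerivAt (fun s : ℝ => 2*(s-t)) 2 s := by
        simpa using ((hasDerivAt_id s).sub_const t).const_mul (2:ℝ)
      have h3 := h1.exp.div_const (2:ℝ)
      simpa [he2, mul_comm, mul_div_assoc] using h3
    have := intervalIntegral.integral_eq_sub_of_hasDerivAt hder (he2c.intervalIntegrable 0 t)
    simpa using this
  have hνuniv : ν univ ≤ 1 := by
    rw [hν, withDensity_apply _ MeasurableSet.univ, Measure.restrict_univ]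
    have h1 : ENNReal.ofReal (∫ s, e2 s ∂μt) = ∫⁻ s, w s ∂μt :=
      ofReal_integral_eq_lintegral_ofReal (he2c.integrableOn_Ioc)
        (Filter.Eventually.of_forall (fun s => he2nn s))
    rw [← h1]
    have h2 : (∫ s, e2 s ∂μt) = Real.exp (2*(t-t))/2 - Real.exp (2*(0-t))/2 := by
      rw [← key, intervalIntegral.integral_of_le ht.le]
    rw [h2, ENNReal.ofReal_le_one]
    have := Real.exp_pos (2*(0-t))
    simp only [sub_self, mul_zero, Real.exp_zero]
    linarith
  have hνle : ν ≤ μt := by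
    rw [hν]
    intro s
    rw [withDensity_apply' _ s]
    calc (∫⁻ a in s, w a ∂μt) ≤ ∫⁻ a in s, 1 ∂μt := by
          apply lintegral_mono_ae
          filter_upwards [ae_restrict_of_ae (ae_restrict_mem measurableSet_Ioc)] with a ha
          rw [hw, ← ENNReal.ofReal_one]
          apply ENNReal.ofReal_le_ofReal
          have h3 : 2*(a-t) ≤ 0 := by nlinarith [ha.2]
          calc Real.exp (2*(a-t)) ≤ Real.exp 0 := Real.exp_le_exp.mpr h3
            _ = 1 := Real.exp_zero
      _ = μt s := setLIntegral_one s
  -- comparison of eLpNorms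
  have haesm : AEStronglyMeasurable u ν := hu.aestronglyMeasurable
  have hcomp : eLpNorm u 2 ν ≤ eLpNorm u q μt := by
    have h1 : eLpNorm u 2 ν ≤ eLpNorm u q ν * (ν univ)^(1/(2:ℝ≥0∞).toReal - 1/q.toReal) :=
      eLpNorm_le_eLpNorm_mul_rpow_measure_univ hq haesm
    have hexp : 0 ≤ 1/(2:ℝ≥0∞).toReal - 1/q.toReal := by
      rcases eq_or_ne q ⊤ with hqt | hqt
      · simp [hqt]
      · have hq2 : (2:ℝ) ≤ q.toReal := by
          rw [show (2:ℝ) = ((2:ℝ≥0∞)).toReal by norm_num]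
          exact ENNReal.toReal_le_toReal (by norm_num) hqt |>.mpr hq
        have : 1/q.toReal ≤ 1/2 := by
          apply one_div_le_one_div_of_le <;> linarith
        simp only [ENNReal.toReal_ofNat]
        linarith
    have h2 : (ν univ)^(1/(2:ℝ≥0∞).toReal - 1/q.toReal) ≤ 1 :=
      ENNReal.rpow_le_one hνuniv hexp
    calc eLpNorm u 2 ν ≤ eLpNorm u q ν * (ν univ)^(1/(2:ℝ≥0∞).toReal - 1/q.toReal) := h1
      _ ≤ eLpNorm u q ν * 1 := mul_le_mul_right h2 _
      _ = eLpNorm u q ν := mul_one _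
      _ ≤ eLpNorm u q μt := eLpNorm_mono_measure u hνle
  -- finiteness
  have hfin : eLpNorm u q μt ≠ ⊤ := by
    obtain ⟨M, hM⟩ := isCompact_Icc.exists_bound_of_continuousOn
      (hu.continuousOn : ContinuousOn u (Icc 0 t))
    have hae : ∀ᵐ s ∂μt, ‖u s‖ ≤ M := by
      filter_upwards [ae_restrict_mem measurableSet_Ioc] with s hs
      exact hM s ⟨hs.1.le, hs.2⟩
    have := eLpNorm_le_of_ae_bound (p := q) hae
    apply ne_top_of_le_ne_top _ this
    apply ENNReal.mul_ne_top
    · apply ENNReal.rpow_ne_top_of_nonneg (inv_nonneg.mpr ENNReal.toReal_nonneg)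
      rw [Measure.restrict_apply_univ]
      exact (measure_Ioc_lt_top).ne
    · exact ENNReal.ofReal_ne_top
  -- conclude
  have hchain : ENNReal.ofReal (∫ s in (0:ℝ)..t, f s) ≤ (eLpNorm u q μt)^(2:ℕ) := by
    rw [h0, ha, ← hb, hd]
    exact pow_le_pow_left' hcomp 2
  have hfin2 : (eLpNorm u q μt)^(2:ℕ) ≠ ⊤ := pow_ne_top hfin
  have := (ENNReal.ofReal_le_iff_le_toReal hfin2).mp hchain
  rw [ENNReal.toReal_pow] at this
  exact this

end AuxISS

/-- for every `q ∈ [2,∞]` there exist `ω > 0` and `C > 0` such that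
every classical solution of the Neumann boundary-controlled semilinear heat
equation with nonlinearity `f(r) = −r − r³` satisfies, for all `t > 0`,
`(∫₀¹ x(ξ,t)²)^{1/2} ≤ e^{−ωt}(∫₀¹ x₀²)^{1/2} + C ‖u‖_{L^q(0,t)}`:
the semilinear system is `L^q`-input-to-state stable for every `q ∈ [2,∞]`. -/
theorem stmt_16 (q : ℝ≥0∞) (hq : 2 ≤ q) :
    ∃ ω > (0:ℝ), ∃ C > (0:ℝ), ∀ (u : ℝ → ℝ), Continuous u →
      ∀ (x₀ : ℝ → ℝ), ContinuousOn x₀ (Icc 0 1) →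
      ∀ (x xt xξ xξξ : ℝ → ℝ → ℝ),
        IsSemilinearNeumannHeatSolution u x₀ x xt xξ xξξ →
      ∀ t > (0:ℝ),
        Real.sqrt (∫ ξ in (0:ℝ)..1, (x ξ t)^2)
          ≤ Real.exp (-ω * t) * Real.sqrt (∫ ξ in (0:ℝ)..1, (x₀ ξ)^2)
            + C * (eLpNorm u q (volume.restrict (Ioc (0:ℝ) t))).toReal := by
  refine ⟨1, one_pos, 1, one_pos, fun u hu x₀ hx₀ x xt xξ xξξ S t ht => ?_⟩
  set V : ℝ → ℝ := fun τ => ∫ ξ in (0:ℝ)..1, (x ξ τ)^2 with hV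
  set E : ℝ := (eLpNorm u q (volume.restrict (Ioc (0:ℝ) t))).toReal with hE
  -- Grönwall estimate
  have hgron : Real.exp (2*t) * V t ≤ V 0 + ∫ s in (0:ℝ)..t, Real.exp (2*s) * (u s)^2 := by
    apply gronwall ht (contV S.xcont ht)
      (D := fun τ => ∫ ξ in (0:ℝ)..1, 2 * x ξ τ * xt ξ τ)
    · exact fun τ hτ => hasDerivV S hτ.1
    · exact fun τ hτ => energy_ineq S hτ.1
    · exact hu.pow 2
  -- pull the exponential inside
  have hJ : (∫ s in (0:ℝ)..t, Real.exp (2*(s-t)) * (u s)^2)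
      = Real.exp (-(2*t)) * ∫ s in (0:ℝ)..t, Real.exp (2*s) * (u s)^2 := by
    rw [← intervalIntegral.integral_const_mul]
    apply intervalIntegral.integral_congr
    intro s _
    show Real.exp (2*(s-t)) * (u s)^2 = Real.exp (-(2*t)) * (Real.exp (2*s) * (u s)^2)
    rw [← mul_assoc, ← Real.exp_add]
    ring_nf
  have hVt : V t ≤ Real.exp (-(2*t)) * V 0
      + ∫ s in (0:ℝ)..t, Real.exp (2*(s-t)) * (u s)^2 := by
    rw [hJ]
    have hep : (0:ℝ) < Real.exp (-(2*t)) := Real.exp_pos _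
    have h1 : Real.exp (-(2*t)) * (Real.exp (2*t) * V t)
        ≤ Real.exp (-(2*t)) * (V 0 + ∫ s in (0:ℝ)..t, Real.exp (2*s) * (u s)^2) :=
      mul_le_mul_of_nonneg_left hgron hep.le
    have h2 : Real.exp (-(2*t)) * Real.exp (2*t) = 1 := by
      rw [← Real.exp_add]; norm_num
    calc V t = Real.exp (-(2*t)) * Real.exp (2*t) * V t := by rw [h2, one_mul]
      _ = Real.exp (-(2*t)) * (Real.exp (2*t) * V t) := by ring
      _ ≤ _ := h1
      _ = _ := by ring
  -- nonnegativity facts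
  have hV0nn : 0 ≤ V 0 := by
    apply intervalIntegral.integral_nonneg (by norm_num)
    intro ξ _; positivity
  have hJnn : 0 ≤ ∫ s in (0:ℝ)..t, Real.exp (2*(s-t)) * (u s)^2 := by
    apply intervalIntegral.integral_nonneg ht.le
    intro s _; positivity
  -- sqrt estimate
  have hsq : Real.sqrt (V t)
      ≤ Real.sqrt (Real.exp (-(2*t)) * V 0)
        + Real.sqrt (∫ s in (0:ℝ)..t, Real.exp (2*(s-t)) * (u s)^2) := by
    refine le_trans (Real.sqrt_le_sqrt hVt) (sqrt_add_le_ISS (by positivity) hJnn)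
  have hterm1 : Real.sqrt (Real.exp (-(2*t)) * V 0)
      = Real.exp (-t) * Real.sqrt (V 0) := by
    rw [Real.sqrt_mul (Real.exp_nonneg _)]
    congr 1
    rw [show Real.exp (-(2*t)) = Real.exp (-t) ^ 2 by rw [sq, ← Real.exp_add]; ring_nf]
    exact Real.sqrt_sq (Real.exp_nonneg _)
  have hterm2 : Real.sqrt (∫ s in (0:ℝ)..t, Real.exp (2*(s-t)) * (u s)^2) ≤ E := by
    have h := holder_step hu hq ht
    have := Real.sqrt_le_sqrt h
    rwa [Real.sqrt_sq ENNReal.toReal_nonneg] at this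
  -- initial value
  have hV0 : V 0 = ∫ ξ in (0:ℝ)..1, (x₀ ξ)^2 := by
    apply intervalIntegral.integral_congr
    intro ξ hξ
    rw [uIcc_of_le (by norm_num : (0:ℝ) ≤ 1)] at hξ
    show x ξ 0 ^ 2 = x₀ ξ ^ 2
    rw [S.ic ξ hξ]
  calc Real.sqrt (V t)
      ≤ Real.exp (-t) * Real.sqrt (V 0) + E := by
        rw [← hterm1]
        exact le_trans hsq (add_le_add_right hterm2 _)
    _ = Real.exp (-1*t) * Real.sqrt (∫ ξ in (0:ℝ)..1, (x₀ ξ)^2) + 1 * E := by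
        rw [hV0]; norm_num
end
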